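/- arXiv:2305.18062 — 10 statements merged into one kernel-verified Lean document; each statement's English description precedes it below -/
import Mathlib

section
/- Let t ∈ (0,1). Then λ(ℋ ∩ (ℋ + t)) + λ(ℋ ∩ (ℋ + (t−1))) = 2·log 2 + log(1/(2·sin(πt))), where ℋ + s denotes the horizontal translate {(x+s, y) : (x,y) ∈ ℋ}. -/
open MeasureTheory

/-- The hyperbolic area measure on the upper half-plane: density `1/y²` w.r.t. Lebesgue. -/
noncomputable def hypMeasure : Measure (ℝ × ℝ) :=
  volume.withDensity (fun p => ENNReal.ofReal (1 / p.2 ^ 2))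

/-- The set ℋ = {(x,y) : y > 0, |x| < 1/2, y ≥ (2/π)·tan(π|x|)}. -/
def Hset : Set (ℝ × ℝ) :=
  {p | 0 < p.2 ∧ |p.1| < 1 / 2 ∧ (2 / Real.pi) * Real.tan (Real.pi * |p.1|) ≤ p.2}

/-- Horizontal translate of a subset of the plane. -/
def htrans (s : ℝ) (A : Set (ℝ × ℝ)) : Set (ℝ × ℝ) := (fun p => (p.1 + s, p.2)) '' A

/-!
Hyperbolic area is Lebesgue measure in `x` times `dy / y²` in `y`, so a region `{g(x) ≤ y}` over
an interval `I` has area `∫_I dx / g(x)`. For `0 < u < 1`, `ℋ ∩ (ℋ + u)` lies over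
`(u - 1/2, 1/2)` above the curve `max (f x) (f (x - u))`, `f x = (2/π) tan (π|x|)`; this curve is
symmetric about `u/2` and equals `f` to the right of it, where `1 / f = (π/2) cot (π x)` has
primitive `log (sin (π x)) / 2`. Hence the area is `-log (sin (π u / 2))`, and by translation
invariance `-log (sin (π |s| / 2))` for every shift `0 < |s| < 1`. For `s = t` and `s = t - 1`
the two terms add up to `-log (sin (π t / 2) cos (π t / 2)) = log 2 - log (sin (π t))`.
-/

open Set Real

noncomputable def invSqMeasure : Measure ℝ :=
  volume.withDensity fun y => ENNReal.ofReal (1 / y ^ 2)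

instance : SFinite invSqMeasure := by
  unfold invSqMeasure; infer_instance

lemma hypMeasure_eq_prod : hypMeasure = (volume : Measure ℝ).prod invSqMeasure := by
  rw [invSqMeasure, prod_withDensity_right (by fun_prop), ← Measure.volume_eq_prod]
  rfl

lemma invSqMeasure_Ici {c : ℝ} (hc : 0 < c) : invSqMeasure (Ici c) = ENNReal.ofReal (1 / c) := by
  have hrpow : EqOn (fun y : ℝ => y ^ (-2 : ℝ)) (fun y => 1 / y ^ 2) (Ioi c) := fun y hy => by
    simp only [rpow_neg (hc.trans hy).le, one_div, ← rpow_natCast]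
    norm_num
  have hint : IntegrableOn (fun y : ℝ => 1 / y ^ 2) (Ioi c) :=
    (integrableOn_Ioi_rpow_of_lt (by norm_num) hc).congr_fun hrpow measurableSet_Ioi
  rw [invSqMeasure, withDensity_apply _ measurableSet_Ici,
    ← Measure.restrict_congr_set Ioi_ae_eq_Ici,
    ← ofReal_integral_eq_lintegral_ofReal hint (ae_of_all _ fun y => by positivity),
    ← setIntegral_congr_fun measurableSet_Ioi hrpow, integral_Ioi_rpow_of_lt (by norm_num) hc]
  norm_num [rpow_neg_one]

lemma measurePreserving_hypMeasure_shift (c : ℝ) :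
    MeasurePreserving (fun p : ℝ × ℝ => (p.1 + c, p.2)) hypMeasure hypMeasure := by
  rw [hypMeasure_eq_prod]
  exact (measurePreserving_add_right volume c).prod (MeasurePreserving.id invSqMeasure)

lemma hypMeasure_htrans (c : ℝ) (A : Set (ℝ × ℝ)) :
    hypMeasure (htrans c A) = hypMeasure A := by
  let e : ℝ × ℝ ≃ᵐ ℝ × ℝ :=
    (MeasurableEquiv.addRight c).prodCongr (MeasurableEquiv.refl ℝ)
  have he : MeasurePreserving e hypMeasure hypMeasure := measurePreserving_hypMeasure_shift c
  rw [htrans, show (fun p : ℝ × ℝ => (p.1 + c, p.2)) = e from rfl, e.image_eq_preimage_symm,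
    he.symm.measure_preimage_equiv]

lemma hypMeasure_epigraph {s : Set ℝ} {g : ℝ → ℝ} (hs : MeasurableSet s) (hg : Measurable g)
    (hpos : ∀ x ∈ s, 0 < g x) :
    hypMeasure {p | p.1 ∈ s ∧ g p.1 ≤ p.2 ∧ 0 < p.2} =
      ∫⁻ x in s, ENNReal.ofReal (1 / g x) := by
  have hA : MeasurableSet {p : ℝ × ℝ | p.1 ∈ s ∧ g p.1 ≤ p.2 ∧ 0 < p.2} :=
    (measurable_fst hs).inter ((measurableSet_le (hg.comp measurable_fst) measurable_snd).inter
      (measurableSet_lt measurable_const measurable_snd))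
  rw [hypMeasure_eq_prod, Measure.prod_apply hA, ← lintegral_indicator hs]
  refine lintegral_congr fun x => ?_
  by_cases hx : x ∈ s
  · have hslice : Prod.mk x ⁻¹' {p | p.1 ∈ s ∧ g p.1 ≤ p.2 ∧ 0 < p.2} = Ici (g x) := by
      ext y
      simpa [hx] using fun hy : g x ≤ y => (hpos x hx).trans_le hy
    rw [hslice, invSqMeasure_Ici (hpos x hx), indicator_of_mem hx]
  · have hslice : Prod.mk x ⁻¹' {p | p.1 ∈ s ∧ g p.1 ≤ p.2 ∧ 0 < p.2} = ∅ := by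
      ext y
      simp [hx]
    rw [hslice, measure_empty, indicator_of_notMem hx]

lemma lintegral_Ioc_ofReal_eq_sub {f F : ℝ → ℝ} {a b : ℝ} (hab : a ≤ b)
    (hF : ∀ x ∈ Icc a b, HasDerivAt F (f x) x) (hf : ContinuousOn f (Icc a b))
    (hf_nonneg : ∀ x ∈ Icc a b, 0 ≤ f x) :
    ∫⁻ x in Ioc a b, ENNReal.ofReal (f x) = ENNReal.ofReal (F b - F a) := by
  rw [← uIcc_of_le hab] at hF hf
  rw [← ofReal_integral_eq_lintegral_ofReal
      (hf.integrableOn_uIcc.mono_set (uIcc_of_le hab ▸ Ioc_subset_Icc_self))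
      ((ae_restrict_iff' measurableSet_Ioc).mpr
        (ae_of_all _ fun x hx => hf_nonneg x (Ioc_subset_Icc_self hx))),
    ← intervalIntegral.integral_of_le hab,
    intervalIntegral.integral_eq_sub_of_hasDerivAt hF hf.intervalIntegrable]

noncomputable def hBoundary (x : ℝ) : ℝ := 2 / π * tan (π * |x|)

lemma measurable_hBoundary : Measurable hBoundary := by
  have : Measurable tan := by
    rw [funext tan_eq_sin_div_cos]; fun_prop
  unfold hBoundary; fun_prop

lemma hBoundary_neg (x : ℝ) : hBoundary (-x) = hBoundary x := by
  rw [hBoundary, abs_neg, hBoundary]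

lemma pi_mul_abs_mem_Ico {x : ℝ} (hx : |x| < 1 / 2) : π * |x| ∈ Ico 0 (π / 2) :=
  ⟨by positivity, by nlinarith [pi_pos]⟩

lemma hBoundary_pos {x : ℝ} (hx0 : x ≠ 0) (hx : |x| < 1 / 2) : 0 < hBoundary x := by
  have := tan_pos_of_pos_of_lt_pi_div_two (by positivity) (pi_mul_abs_mem_Ico hx).2
  unfold hBoundary; positivity

lemma hBoundary_le_of_abs_le {x y : ℝ} (hxy : |x| ≤ |y|) (hy : |y| < 1 / 2) :
    hBoundary x ≤ hBoundary y := by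
  have hmem : ∀ {z : ℝ}, |z| < 1 / 2 → π * |z| ∈ Ioo (-(π / 2)) (π / 2) := fun hz =>
    ⟨by linarith [pi_pos, (pi_mul_abs_mem_Ico hz).1], (pi_mul_abs_mem_Ico hz).2⟩
  unfold hBoundary
  gcongr
  exact strictMonoOn_tan.monotoneOn (hmem (hxy.trans_lt hy)) (hmem hy)
    (mul_le_mul_of_nonneg_left hxy pi_pos.le)

lemma one_div_hBoundary {x : ℝ} (hx0 : 0 < x) (hx : x < 1 / 2) :
    1 / hBoundary x = π / 2 * cot (π * x) := by
  have hcos : 0 < cos (π * x) :=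
    cos_pos_of_mem_Ioo ⟨by nlinarith [pi_pos], by nlinarith [pi_pos]⟩
  have hsin : 0 < sin (π * x) := sin_pos_of_pos_of_lt_pi (by positivity) (by nlinarith [pi_pos])
  rw [hBoundary, abs_of_pos hx0, tan_eq_sin_div_cos, cot_eq_cos_div_sin]
  field_simp

lemma hasDerivAt_log_sin_pi_mul_div_two {x : ℝ} (hx : sin (π * x) ≠ 0) :
    HasDerivAt (fun x => log (sin (π * x)) / 2) (π / 2 * cot (π * x)) x := by
  have := (((hasDerivAt_id x).const_mul π).sin.log (by simpa using hx)).div_const 2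
  simp only [id, mul_one] at this
  refine this.congr_deriv ?_
  rw [cot_eq_cos_div_sin]
  ring

lemma lintegral_Ioo_inv_hBoundary {a : ℝ} (ha0 : 0 < a) (ha : a ≤ 1 / 2) :
    ∫⁻ x in Ioo a (1 / 2), ENNReal.ofReal (1 / hBoundary x) =
      ENNReal.ofReal (-log (sin (π * a)) / 2) := by
  have hsin : ∀ x ∈ Icc a (1 / 2), 0 < sin (π * x) := fun x hx =>
    sin_pos_of_pos_of_lt_pi (by nlinarith [pi_pos, hx.1]) (by nlinarith [pi_pos, hx.2])
  rw [setLIntegral_congr_fun measurableSet_Ioo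
      (fun x hx => by rw [one_div_hBoundary (ha0.trans hx.1) hx.2]),
    Measure.restrict_congr_set Ioo_ae_eq_Ioc,
    lintegral_Ioc_ofReal_eq_sub ha
      (fun x hx => hasDerivAt_log_sin_pi_mul_div_two (hsin x hx).ne') ?_ ?_]
  · rw [mul_one_div, sin_pi_div_two, log_one, zero_div, zero_sub, neg_div]
  · simp only [cot_eq_cos_div_sin]
    exact continuousOn_const.mul
      ((by fun_prop : ContinuousOn _ _).div (by fun_prop) fun x hx => (hsin x hx).ne')
  · intro x hx
    have hcos : 0 ≤ cos (π * x) :=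
      cos_nonneg_of_mem_Icc ⟨by nlinarith [pi_pos, hx.1], by nlinarith [pi_pos, hx.2]⟩
    have := hsin x hx
    rw [cot_eq_cos_div_sin]
    positivity

lemma lintegral_Ioo_comp_const_sub (f : ℝ → ENNReal) (c a b : ℝ) :
    ∫⁻ x in Ioo a b, f (c - x) = ∫⁻ x in Ioo (c - b) (c - a), f x := by
  rw [← (volume.measurePreserving_sub_left c).setLIntegral_comp_preimage_emb
    (MeasurableEquiv.subLeft c).measurableEmbedding, preimage_const_sub_Ioo]
  simp only [sub_sub_cancel]

lemma mem_htrans {s : ℝ} {A : Set (ℝ × ℝ)} {p : ℝ × ℝ} :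
    p ∈ htrans s A ↔ (p.1 - s, p.2) ∈ A := by
  constructor
  · rintro ⟨q, hq, rfl⟩
    simpa using hq
  · exact fun h => ⟨_, h, by simp⟩

noncomputable def interBoundary (u x : ℝ) : ℝ := max (hBoundary x) (hBoundary (x - u))

lemma measurable_interBoundary (u : ℝ) : Measurable (interBoundary u) :=
  measurable_hBoundary.max (measurable_hBoundary.comp (measurable_sub_const u))

lemma interBoundary_const_sub (u x : ℝ) : interBoundary u (u - x) = interBoundary u x := by
  rw [interBoundary, interBoundary, max_comm, ← hBoundary_neg (u - x - u),
    ← hBoundary_neg (u - x)]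
  congr 2 <;> ring

lemma interBoundary_pos {u x : ℝ} (hu : 0 < u) (hx : x ∈ Ioo (u - 1 / 2) (1 / 2)) :
    0 < interBoundary u x := by
  rcases eq_or_ne x 0 with rfl | hx0
  · refine (hBoundary_pos (by simpa using hu.ne') ?_).trans_le (le_max_right _ _)
    rw [zero_sub, abs_neg, abs_of_pos hu]
    linarith [hx.1]
  · exact (hBoundary_pos hx0 (abs_lt.mpr ⟨by linarith [hx.1], hx.2⟩)).trans_le
      (le_max_left _ _)

lemma interBoundary_eq_hBoundary {u x : ℝ} (hu : 0 ≤ u) (hx : x ∈ Ioo (u / 2) (1 / 2)) :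
    interBoundary u x = hBoundary x := by
  have hx0 : 0 < x := by linarith [hx.1]
  refine max_eq_left (hBoundary_le_of_abs_le ?_ (by rw [abs_of_pos hx0]; exact hx.2))
  rw [abs_of_pos hx0, abs_le]
  constructor <;> linarith [hx.1]

lemma Hset_inter_htrans {u : ℝ} (hu : 0 ≤ u) :
    Hset ∩ htrans u Hset =
      {p | p.1 ∈ Ioo (u - 1 / 2) (1 / 2) ∧ interBoundary u p.1 ≤ p.2 ∧ 0 < p.2} := by
  ext ⟨x, y⟩
  simp only [Hset, interBoundary, hBoundary, mem_inter_iff, mem_htrans, mem_ofPred_eq, mem_Ioo,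
    max_le_iff, abs_lt]
  constructor
  · rintro ⟨⟨hy, hx, hbx⟩, -, hxu, hbxu⟩
    exact ⟨⟨by linarith [hxu.1], hx.2⟩, ⟨hbx, hbxu⟩, hy⟩
  · rintro ⟨⟨hux, hx⟩, ⟨hbx, hbxu⟩, hy⟩
    exact ⟨⟨hy, ⟨by linarith, hx⟩, hbx⟩, hy, ⟨by linarith, by linarith⟩, hbxu⟩

lemma lintegral_Ioo_inv_interBoundary {u : ℝ} (hu0 : 0 < u) (hu1 : u < 1) :
    ∫⁻ x in Ioo (u - 1 / 2) (1 / 2), ENNReal.ofReal (1 / interBoundary u x) =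
      ENNReal.ofReal (-log (sin (π * u / 2))) := by
  have hright : ∫⁻ x in Ioo (u / 2) (1 / 2), ENNReal.ofReal (1 / interBoundary u x) =
      ENNReal.ofReal (-log (sin (π * u / 2)) / 2) := by
    rw [setLIntegral_congr_fun measurableSet_Ioo
        fun x hx => by rw [interBoundary_eq_hBoundary hu0.le hx],
      lintegral_Ioo_inv_hBoundary (by positivity) (by linarith), mul_div_assoc]
  have hleft : ∫⁻ x in Ioo (u - 1 / 2) (u / 2), ENNReal.ofReal (1 / interBoundary u x) =
      ∫⁻ x in Ioo (u / 2) (1 / 2), ENNReal.ofReal (1 / interBoundary u x) := by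
    calc _ = ∫⁻ x in Ioo (u - 1 / 2) (u / 2), ENNReal.ofReal (1 / interBoundary u (u - x)) := by
          simp only [interBoundary_const_sub]
      _ = _ := by
          rw [lintegral_Ioo_comp_const_sub (fun x => ENNReal.ofReal (1 / interBoundary u x))]
          ring_nf
  have hnonneg : 0 ≤ -log (sin (π * u / 2)) / 2 := by
    have hsin : 0 < sin (π * u / 2) :=
      sin_pos_of_pos_of_lt_pi (by positivity) (by nlinarith [pi_pos])
    linarith [log_nonpos hsin.le (sin_le_one _)]
  rw [← Ioo_union_Ico_eq_Ioo (b := u / 2) (by linarith) (by linarith),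
    lintegral_union measurableSet_Ico
      ((Iio_disjoint_Ici le_rfl).mono Ioo_subset_Iio_self Ico_subset_Ici_self),
    ← Measure.restrict_congr_set Ioo_ae_eq_Ico, hleft, hright,
    ← ENNReal.ofReal_add hnonneg hnonneg]
  ring_nf

lemma hypMeasure_Hset_inter_htrans_of_pos {u : ℝ} (hu0 : 0 < u) (hu1 : u < 1) :
    hypMeasure (Hset ∩ htrans u Hset) = ENNReal.ofReal (-log (sin (π * u / 2))) := by
  rw [Hset_inter_htrans hu0.le, hypMeasure_epigraph measurableSet_Ioo
    (measurable_interBoundary u) fun x hx => interBoundary_pos hu0 hx,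
    lintegral_Ioo_inv_interBoundary hu0 hu1]

lemma hypMeasure_Hset_inter_htrans {s : ℝ} (hs0 : s ≠ 0) (hs1 : |s| < 1) :
    hypMeasure (Hset ∩ htrans s Hset) = ENNReal.ofReal (-log (sin (π * |s| / 2))) := by
  rcases hs0.lt_or_gt with hneg | hpos
  · have hshift : Hset ∩ htrans s Hset = htrans s (Hset ∩ htrans (-s) Hset) := by
      ext p
      simp only [mem_inter_iff, mem_htrans, sub_neg_eq_add, sub_add_cancel, and_comm]
    rw [hshift, hypMeasure_htrans, abs_of_neg hneg,
      hypMeasure_Hset_inter_htrans_of_pos (neg_pos.mpr hneg) (by linarith [neg_abs_le s])]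
  · rw [abs_of_pos hpos] at hs1 ⊢
    exact hypMeasure_Hset_inter_htrans_of_pos hpos hs1

lemma neg_log_sin_add_neg_log_cos {θ : ℝ} (hsin : 0 < sin θ) (hcos : 0 < cos θ) :
    -log (sin θ) + -log (cos θ) = 2 * log 2 + log (1 / (2 * sin (2 * θ))) := by
  rw [sin_two_mul, one_div, log_inv,
    show 2 * (2 * sin θ * cos θ) = 2 * 2 * (sin θ * cos θ) by ring,
    log_mul (by norm_num) (by positivity), log_mul hsin.ne' hcos.ne',
    log_mul two_ne_zero two_ne_zero]
  ring

theorem stmt0 (t : ℝ) (ht : t ∈ Set.Ioo (0 : ℝ) 1) :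
    hypMeasure (Hset ∩ htrans t Hset) + hypMeasure (Hset ∩ htrans (t - 1) Hset) =
      ENNReal.ofReal (2 * Real.log 2 + Real.log (1 / (2 * Real.sin (Real.pi * t)))) := by
  obtain ⟨ht0, ht1⟩ := ht
  have hsin : 0 < sin (π * t / 2) :=
    sin_pos_of_pos_of_lt_pi (by positivity) (by nlinarith [pi_pos])
  have hcos : 0 < cos (π * t / 2) :=
    cos_pos_of_mem_Ioo ⟨by nlinarith [pi_pos], by nlinarith [pi_pos]⟩
  have hsin_compl : sin (π * |t - 1| / 2) = cos (π * t / 2) := by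
    rw [abs_of_neg (by linarith), ← sin_pi_div_two_sub]
    ring_nf
  rw [hypMeasure_Hset_inter_htrans ht0.ne' (by rwa [abs_of_pos ht0]),
    hypMeasure_Hset_inter_htrans (by linarith) (abs_lt.mpr ⟨by linarith, by linarith⟩),
    abs_of_pos ht0, hsin_compl,
    ← ENNReal.ofReal_add (neg_nonneg.mpr (log_nonpos hsin.le (sin_le_one _)))
      (neg_nonneg.mpr (log_nonpos hcos.le (cos_le_one _))),
    neg_log_sin_add_neg_log_cos hsin hcos, mul_div_cancel₀ _ two_ne_zero]
end

section
/- For all δ, r with 0 < δ ≤ r ≤ 1/4, one has (π²/96)·(r² − δ²) ≤ λ((𝒱 \ ℋ) ∩ {(x,y) : δ ≤ y ≤ r}) ≤ (r² − δ²)/2. -/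
/-! At height `y` the horizontal section of `𝒱 \ ℋ` is `{x | a y < |x| ≤ y / 2}`, where
`a y = arctan (π y / 2) / π` solves the boundary curve of `ℋ` for `|x|`, so by Fubini the
hyperbolic area of the strip is `∫_δ^r (y - 2 a y) / y² dy`. The Taylor bounds
`t - t³/3 ≤ arctan t ≤ t - t³/12` (for `0 ≤ t ≤ √3`) squeeze the integrand between `π² y / 48`
and `π² y / 12 ≤ y`. -/

open MeasureTheory

/-- The set 𝒱 = {(x,y) : y > 0, 2|x| ≤ y ≤ 1/2}. -/
def Vset : Set (ℝ × ℝ) :=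
  {p | 0 < p.2 ∧ 2 * |p.1| ≤ p.2 ∧ p.2 ≤ 1 / 2}

open Set Real

lemma nonneg_of_hasDerivAt_of_nonneg {f f' : ℝ → ℝ} {t : ℝ} (hf : ∀ s, HasDerivAt f (f' s) s)
    (hf₀ : f 0 = 0) (ht : 0 ≤ t) (hf' : ∀ s ∈ Ioo 0 t, 0 ≤ f' s) : 0 ≤ f t := by
  have hmono : MonotoneOn f (Icc 0 t) :=
    monotoneOn_of_hasDerivWithinAt_nonneg (convex_Icc 0 t)
      (fun s _ ↦ (hf s).continuousAt.continuousWithinAt) (fun s _ ↦ (hf s).hasDerivWithinAt)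
      (by rwa [interior_Icc])
  simpa [hf₀] using hmono (left_mem_Icc.2 ht) (right_mem_Icc.2 ht) ht

lemma sub_cube_div_three_le_arctan {t : ℝ} (ht : 0 ≤ t) : t - t ^ 3 / 3 ≤ arctan t := by
  have key := nonneg_of_hasDerivAt_of_nonneg (f := fun s ↦ arctan s - (s - s ^ 3 / 3))
    (fun s ↦ (hasDerivAt_arctan s).sub ((hasDerivAt_id s).sub ((hasDerivAt_pow 3 s).div_const 3)))
    (by simp) ht fun s _ ↦ by
      have h : 1 - s ^ 2 ≤ 1 / (1 + s ^ 2) := by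
        rw [le_div_iff₀ (by positivity)]
        nlinarith [sq_nonneg (s ^ 2)]
      linarith
  linarith [key]

lemma arctan_le_sub_cube_div_twelve {t : ℝ} (ht : 0 ≤ t) (ht3 : t ^ 2 ≤ 3) :
    arctan t ≤ t - t ^ 3 / 12 := by
  have key := nonneg_of_hasDerivAt_of_nonneg (f := fun s ↦ s - s ^ 3 / 12 - arctan s)
    (fun s ↦ ((hasDerivAt_id s).sub ((hasDerivAt_pow 3 s).div_const 12)).sub (hasDerivAt_arctan s))
    (by simp) ht fun s hs ↦ by
      have hs3 : s ^ 2 ≤ 3 := by nlinarith [hs.1, hs.2]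
      have h : 1 / (1 + s ^ 2) ≤ 1 - 3 * s ^ 2 / 12 := by
        rw [div_le_iff₀ (by positivity)]
        nlinarith [mul_nonneg (sq_nonneg s) (sub_nonneg.2 hs3)]
      linarith
  linarith [key]

noncomputable def hsetHalfWidth (y : ℝ) : ℝ := arctan (π * y / 2) / π

lemma measurable_hsetHalfWidth : Measurable hsetHalfWidth := by
  unfold hsetHalfWidth
  fun_prop

lemma hsetHalfWidth_nonneg {y : ℝ} (hy : 0 ≤ y) : 0 ≤ hsetHalfWidth y :=
  div_nonneg (arctan_nonneg.2 (by positivity)) pi_pos.le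

lemma mem_Hset_iff {x y : ℝ} (hy : 0 < y) (hx : |x| < 1 / 2) :
    (x, y) ∈ Hset ↔ |x| ≤ hsetHalfWidth y := by
  have hθ : π * |x| < π / 2 := by nlinarith [pi_pos]
  have hθ' : -(π / 2) < π * |x| := by nlinarith [pi_pos, abs_nonneg x]
  simp only [Hset, mem_ofPred_eq, hy, hx, true_and, hsetHalfWidth, le_div_iff₀ pi_pos]
  rw [div_mul_eq_mul_div, div_le_iff₀ pi_pos, ← le_div_iff₀' two_pos, mul_comm y,
    ← arctan_le_arctan_iff, arctan_tan hθ' hθ, mul_comm]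

lemma mem_Vset_diff_Hset_iff {x y : ℝ} (hy : 0 < y) :
    (x, y) ∈ Vset \ Hset ↔ y ≤ 1 / 2 ∧ hsetHalfWidth y < |x| ∧ |x| ≤ y / 2 := by
  simp only [Vset, mem_sdiff, mem_ofPred_eq, hy, true_and]
  constructor
  · rintro ⟨⟨hxy, hy2⟩, hH⟩
    rw [mem_Hset_iff hy (by linarith), not_le] at hH
    exact ⟨hy2, hH, by linarith⟩
  · rintro ⟨hy2, hH, hxy⟩
    rw [mem_Hset_iff hy (by linarith), not_le]
    exact ⟨⟨by linarith, hy2⟩, hH⟩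

lemma volume_setOf_lt_abs_le {a b : ℝ} (ha : 0 ≤ a) :
    volume {x : ℝ | a < |x| ∧ |x| ≤ b} = ENNReal.ofReal (2 * (b - a)) := by
  rcases le_total a b with hab | hba
  · have hset : {x : ℝ | a < |x| ∧ |x| ≤ b} = Metric.closedBall 0 b \ Metric.closedBall 0 a := by
      ext x
      simp [and_comm]
    rw [hset, measure_sdiff (Metric.closedBall_subset_closedBall hab)
      measurableSet_closedBall.nullMeasurableSet measure_closedBall_lt_top.ne,
      Real.volume_closedBall, Real.volume_closedBall, ← ENNReal.ofReal_sub _ (by positivity)]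
    ring_nf
  · have hset : {x : ℝ | a < |x| ∧ |x| ≤ b} = ∅ :=
      eq_empty_of_forall_notMem fun x hx ↦ by linarith [hx.1, hx.2]
    rw [hset, measure_empty, ENNReal.ofReal_of_nonpos (by linarith)]

lemma hypMeasure_eq_prod_s2 :
    hypMeasure = volume.prod (volume.withDensity fun y ↦ ENNReal.ofReal (1 / y ^ 2)) := by
  rw [prod_withDensity_right (by fun_prop), ← Measure.volume_eq_prod, hypMeasure]

lemma hypMeasure_setOf_lt_abs_le {s : Set ℝ} (hs : MeasurableSet s) {f g : ℝ → ℝ}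
    (hf : Measurable f) (hg : Measurable g) (hf₀ : ∀ y ∈ s, 0 ≤ f y) :
    hypMeasure {p | p.2 ∈ s ∧ f p.2 < |p.1| ∧ |p.1| ≤ g p.2} =
      ∫⁻ y in s, ENNReal.ofReal (2 * (g y - f y) / y ^ 2) := by
  set S := {p : ℝ × ℝ | p.2 ∈ s ∧ f p.2 < |p.1| ∧ |p.1| ≤ g p.2}
  have hS : MeasurableSet S := by measurability
  rw [hypMeasure_eq_prod_s2, Measure.prod_apply_symm hS,
    lintegral_withDensity_eq_lintegral_mul _ (by fun_prop) (measurable_measure_prodMk_right hS),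
    ← setLIntegral_eq_of_support_subset (s := s)]
  · refine setLIntegral_congr_fun hs fun y hy ↦ ?_
    have hsec : (fun x ↦ (x, y)) ⁻¹' S = {x | f y < |x| ∧ |x| ≤ g y} := by simp [S, hy]
    rw [Pi.mul_apply, hsec, volume_setOf_lt_abs_le (hf₀ y hy),
      ← ENNReal.ofReal_mul (by positivity)]
    ring_nf
  · intro y hy
    by_contra hys
    simp [S, hys] at hy

lemma Vset_diff_Hset_inter_strip {δ r : ℝ} (hδ : 0 < δ) (hr : r ≤ 1 / 2) :
    (Vset \ Hset) ∩ {p | δ ≤ p.2 ∧ p.2 ≤ r} =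
      {p | p.2 ∈ Icc δ r ∧ hsetHalfWidth p.2 < |p.1| ∧ |p.1| ≤ p.2 / 2} := by
  ext ⟨x, y⟩
  simp only [mem_inter_iff, mem_ofPred_eq, mem_Icc]
  constructor
  · rintro ⟨hVH, hy⟩
    exact ⟨hy, ((mem_Vset_diff_Hset_iff (hδ.trans_le hy.1)).1 hVH).2⟩
  · rintro ⟨hy, hH⟩
    exact ⟨(mem_Vset_diff_Hset_iff (hδ.trans_le hy.1)).2 ⟨by linarith, hH⟩, hy⟩

lemma half_sub_hsetHalfWidth_le {y : ℝ} (hy : 0 ≤ y) :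
    y / 2 - hsetHalfWidth y ≤ π ^ 2 * y ^ 3 / 24 := by
  calc y / 2 - hsetHalfWidth y
      ≤ y / 2 - (π * y / 2 - (π * y / 2) ^ 3 / 3) / π := by
        rw [hsetHalfWidth]
        gcongr
        exact sub_cube_div_three_le_arctan (by positivity)
    _ = π ^ 2 * y ^ 3 / 24 := by
        field_simp
        ring

lemma pi_sq_mul_cube_div_96_le_half_sub_hsetHalfWidth {y : ℝ} (hy : 0 ≤ y)
    (hy3 : (π * y / 2) ^ 2 ≤ 3) :
    π ^ 2 * y ^ 3 / 96 ≤ y / 2 - hsetHalfWidth y := by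
  calc π ^ 2 * y ^ 3 / 96 = y / 2 - (π * y / 2 - (π * y / 2) ^ 3 / 12) / π := by
        field_simp
        ring
    _ ≤ y / 2 - hsetHalfWidth y := by
        rw [hsetHalfWidth]
        gcongr
        exact arctan_le_sub_cube_div_twelve (by positivity) hy3

lemma setLIntegral_Icc_ofReal_const_mul {a b c : ℝ} (hc : 0 ≤ c) (ha : 0 ≤ a) (hab : a ≤ b) :
    ∫⁻ y in Icc a b, ENNReal.ofReal (c * y) = ENNReal.ofReal (c * (b ^ 2 - a ^ 2) / 2) := by
  rw [← ofReal_integral_eq_lintegral_ofReal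
    (by fun_prop : Continuous fun y ↦ c * y).integrableOn_Icc
    ((ae_restrict_mem measurableSet_Icc).mono fun y hy ↦ mul_nonneg hc (ha.trans hy.1)),
    integral_Icc_eq_integral_Ioc, ← intervalIntegral.integral_of_le hab,
    intervalIntegral.integral_const_mul, integral_id]
  ring_nf

lemma two_mul_half_sub_hsetHalfWidth_div_sq_mem_Icc {y : ℝ} (hy : 0 < y) (hy' : y ≤ 1 / 4) :
    2 * (y / 2 - hsetHalfWidth y) / y ^ 2 ∈ Icc (π ^ 2 / 48 * y) y := by
  have hπy₁ : π * y / 2 ≤ 1 := by nlinarith [pi_lt_four]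
  have hπy : (π * y / 2) ^ 2 ≤ 3 := by nlinarith [mul_pos pi_pos hy]
  have hlow := pi_sq_mul_cube_div_96_le_half_sub_hsetHalfWidth hy.le hπy
  have hup := half_sub_hsetHalfWidth_le hy.le
  have hπ2 : π ^ 2 ≤ 12 := by nlinarith [pi_pos, pi_lt_d2]
  constructor
  · rw [le_div_iff₀ (by positivity)]
    linarith
  · rw [div_le_iff₀ (by positivity)]
    nlinarith [pow_pos hy 3]

theorem stmt2 (δ r : ℝ) (h1 : 0 < δ) (h2 : δ ≤ r) (h3 : r ≤ 1 / 4) :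
    ENNReal.ofReal (Real.pi ^ 2 / 96 * (r ^ 2 - δ ^ 2)) ≤
        hypMeasure ((Vset \ Hset) ∩ {p | δ ≤ p.2 ∧ p.2 ≤ r}) ∧
      hypMeasure ((Vset \ Hset) ∩ {p | δ ≤ p.2 ∧ p.2 ≤ r}) ≤
        ENNReal.ofReal ((r ^ 2 - δ ^ 2) / 2) := by
  have hdensity (y : ℝ) (hy : y ∈ Icc δ r) :=
    two_mul_half_sub_hsetHalfWidth_div_sq_mem_Icc (h1.trans_le hy.1) (hy.2.trans h3)
  rw [Vset_diff_Hset_inter_strip h1 (by linarith),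
    hypMeasure_setOf_lt_abs_le (g := (· / 2)) measurableSet_Icc measurable_hsetHalfWidth
      (by fun_prop) fun y hy ↦ hsetHalfWidth_nonneg (h1.le.trans hy.1)]
  constructor
  · calc ENNReal.ofReal (π ^ 2 / 96 * (r ^ 2 - δ ^ 2))
        = ∫⁻ y in Icc δ r, ENNReal.ofReal (π ^ 2 / 48 * y) := by
          rw [setLIntegral_Icc_ofReal_const_mul (by positivity) h1.le h2]
          ring_nf
      _ ≤ _ := setLIntegral_mono' measurableSet_Icc fun y hy ↦
          ENNReal.ofReal_le_ofReal (hdensity y hy).1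
  · calc _ ≤ ∫⁻ y in Icc δ r, ENNReal.ofReal (1 * y) :=
          setLIntegral_mono' measurableSet_Icc fun y hy ↦
            ENNReal.ofReal_le_ofReal (by simpa using (hdensity y hy).2)
      _ = ENNReal.ofReal ((r ^ 2 - δ ^ 2) / 2) := by
          rw [setLIntegral_Icc_ofReal_const_mul zero_le_one h1.le h2, one_mul]
end

section
/- For all δ, r, h with 0 < δ ≤ r and h ≥ 0, ∫_δ^r (2/y²)·min(h, y³) dy ≤ 3·h^{2/3}. -/
open MeasureTheory

private lemma int_two_y (a b : ℝ) : ∫ y in a..b, 2*y = b^2 - a^2 := by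
  rw [intervalIntegral.integral_const_mul, integral_id]; ring

private lemma int_inv_sq (a b h : ℝ) (ha : 0 < a) (hab : a ≤ b) :
    ∫ y in a..b, 2*h/y^2 = 2*h*(1/a - 1/b) := by
  have h0 : (0:ℝ) ∉ Set.uIcc a b := by
    rw [Set.uIcc_of_le hab]; intro hc; exact absurd hc.1 (not_le.2 ha)
  have hb : 0 < b := lt_of_lt_of_le ha hab
  have key : ∫ y in a..b, ((y:ℝ)^2)⁻¹ = (b⁻¹ - a⁻¹) / (-1) := by
    have := integral_zpow (a := a) (b := b) (n := -2) (Or.inr ⟨by norm_num, h0⟩)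
    norm_num at this; exact this
  calc ∫ y in a..b, 2*h/y^2 = ∫ y in a..b, (2*h) * ((y:ℝ)^2)⁻¹ := by
        simp only [div_eq_mul_inv]
    _ = (2*h) * ∫ y in a..b, ((y:ℝ)^2)⁻¹ := intervalIntegral.integral_const_mul _ _
    _ = 2*h*(1/a - 1/b) := by rw [key]; field_simp; ring

private lemma g_integrable (h a b : ℝ) (ha : 0 < a) (hab : a ≤ b) :
    IntervalIntegrable (fun y => 2 / y ^ 2 * min h (y ^ 3)) volume a b := by
  apply ContinuousOn.intervalIntegrable
  apply ContinuousOn.mul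
  · apply ContinuousOn.div continuousOn_const (by fun_prop)
    intro y hy
    rw [Set.uIcc_of_le hab] at hy
    exact pow_ne_zero _ (ne_of_gt (lt_of_lt_of_le ha hy.1))
  · fun_prop

theorem stmt7 (δ r h : ℝ) (h1 : 0 < δ) (h2 : δ ≤ r) (h3 : 0 ≤ h) :
    ∫ y in Set.Icc δ r, 2 / y ^ 2 * min h (y ^ 3) ≤ 3 * h ^ ((2 : ℝ) / 3) := by
  rw [MeasureTheory.integral_Icc_eq_integral_Ioc, ← intervalIntegral.integral_of_le h2]
  rcases eq_or_lt_of_le h3 with hh | hh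
  · -- h = 0
    have : ∀ y ∈ Set.uIcc δ r, 2 / y ^ 2 * min h (y ^ 3) = 0 := by
      intro y hy
      rw [Set.uIcc_of_le h2] at hy
      have hy0 : 0 < y := lt_of_lt_of_le h1 hy.1
      rw [← hh, min_eq_left (by positivity), mul_zero]
    rw [intervalIntegral.integral_congr this]
    simp [← hh, Real.zero_rpow (by norm_num : (2:ℝ)/3 ≠ 0)]
  · -- h > 0
    set c := h ^ ((1:ℝ)/3) with hc
    have hcpos : 0 < c := Real.rpow_pos_of_pos hh _
    have hc3 : c ^ 3 = h := by
      rw [hc, ← Real.rpow_natCast (h ^ ((1:ℝ)/3)) 3, ← Real.rpow_mul h3]; norm_num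
    have hc2 : c ^ 2 = h ^ ((2:ℝ)/3) := by
      rw [hc, ← Real.rpow_natCast (h ^ ((1:ℝ)/3)) 2, ← Real.rpow_mul h3]; norm_num
    have hhc : h / c = h ^ ((2:ℝ)/3) := by
      rw [← hc2, ← hc3]; field_simp
    have h23 : (0:ℝ) ≤ h ^ ((2:ℝ)/3) := Real.rpow_nonneg h3 _
    -- pointwise bounds
    have bound1 : ∀ a b : ℝ, 0 < a → ∀ y ∈ Set.Icc a b, 2 / y ^ 2 * min h (y ^ 3) ≤ 2 * y := by
      intro a b ha y hy
      have hy0 : 0 < y := lt_of_lt_of_le ha hy.1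
      calc 2 / y ^ 2 * min h (y ^ 3) ≤ 2 / y ^ 2 * y ^ 3 :=
            mul_le_mul_of_nonneg_left (min_le_right _ _) (by positivity)
        _ = 2 * y := by field_simp
    have bound2 : ∀ a b : ℝ, 0 < a → ∀ y ∈ Set.Icc a b, 2 / y ^ 2 * min h (y ^ 3) ≤ 2 * h / y ^ 2 := by
      intro a b ha y hy
      have hy0 : 0 < y := lt_of_lt_of_le ha hy.1
      calc 2 / y ^ 2 * min h (y ^ 3) ≤ 2 / y ^ 2 * h :=
            mul_le_mul_of_nonneg_left (min_le_left _ _) (by positivity)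
        _ = 2 * h / y ^ 2 := by ring
    rcases le_or_gt r c with hrc | hcr
    · -- r ≤ c: use bound1 on [δ, r]
      calc ∫ y in δ..r, 2 / y ^ 2 * min h (y ^ 3) ≤ ∫ y in δ..r, 2 * y := by
            apply intervalIntegral.integral_mono_on h2 (g_integrable h δ r h1 h2)
              (by apply ContinuousOn.intervalIntegrable; fun_prop) (bound1 δ r h1)
        _ = r ^ 2 - δ ^ 2 := int_two_y δ r
        _ ≤ c ^ 2 := by nlinarith
        _ ≤ 3 * h ^ ((2:ℝ)/3) := by rw [hc2]; linarith
    rcases le_or_gt c δ with hcd | hdc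
    · -- c ≤ δ: use bound2 on [δ, r]
      have hr0 : 0 < r := lt_of_lt_of_le h1 h2
      calc ∫ y in δ..r, 2 / y ^ 2 * min h (y ^ 3) ≤ ∫ y in δ..r, 2 * h / y ^ 2 := by
            apply intervalIntegral.integral_mono_on h2 (g_integrable h δ r h1 h2)
              (by
                apply ContinuousOn.intervalIntegrable
                apply ContinuousOn.div continuousOn_const (by fun_prop)
                intro y hy
                rw [Set.uIcc_of_le h2] at hy
                exact pow_ne_zero _ (ne_of_gt (lt_of_lt_of_le h1 hy.1))) (bound2 δ r h1)
        _ = 2 * h * (1/δ - 1/r) := int_inv_sq δ r h h1 h2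
        _ ≤ 2 * h / c := by
            have : 1/δ ≤ 1/c := one_div_le_one_div_of_le hcpos hcd
            have hr' : 0 ≤ 1/r := by positivity
            have := mul_le_mul_of_nonneg_left (sub_le_iff_le_add.2 (le_add_of_le_of_nonneg this hr')) (by linarith : (0:ℝ) ≤ 2*h)
            calc 2 * h * (1/δ - 1/r) ≤ 2 * h * (1/c) := this
              _ = 2 * h / c := by ring
        _ ≤ 3 * h ^ ((2:ℝ)/3) := by
            have : 2 * h / c = 2 * (h / c) := by ring
            rw [this, hhc]; linarith
    · -- δ < c < r: split at c
      have hδc : δ ≤ c := le_of_lt hdc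
      have hcr' : c ≤ r := le_of_lt hcr
      rw [← intervalIntegral.integral_add_adjacent_intervals
            (g_integrable h δ c h1 hδc) (g_integrable h c r hcpos hcr')]
      have part1 : ∫ y in δ..c, 2 / y ^ 2 * min h (y ^ 3) ≤ h ^ ((2:ℝ)/3) := by
        calc ∫ y in δ..c, 2 / y ^ 2 * min h (y ^ 3) ≤ ∫ y in δ..c, 2 * y := by
              apply intervalIntegral.integral_mono_on hδc (g_integrable h δ c h1 hδc)
                (by apply ContinuousOn.intervalIntegrable; fun_prop) (bound1 δ c h1)
          _ = c ^ 2 - δ ^ 2 := int_two_y δ c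
          _ ≤ c ^ 2 := by nlinarith
          _ = h ^ ((2:ℝ)/3) := hc2
      have part2 : ∫ y in c..r, 2 / y ^ 2 * min h (y ^ 3) ≤ 2 * h ^ ((2:ℝ)/3) := by
        have hr0 : 0 < r := lt_of_lt_of_le h1 h2
        calc ∫ y in c..r, 2 / y ^ 2 * min h (y ^ 3) ≤ ∫ y in c..r, 2 * h / y ^ 2 := by
              apply intervalIntegral.integral_mono_on hcr' (g_integrable h c r hcpos hcr')
                (by
                  apply ContinuousOn.intervalIntegrable
                  apply ContinuousOn.div continuousOn_const (by fun_prop)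
                  intro y hy
                  rw [Set.uIcc_of_le hcr'] at hy
                  exact pow_ne_zero _ (ne_of_gt (lt_of_lt_of_le hcpos hy.1))) (bound2 c r hcpos)
          _ = 2 * h * (1/c - 1/r) := int_inv_sq c r h hcpos hcr'
          _ ≤ 2 * h / c := by
              have hr' : 0 ≤ 1/r := by positivity
              have : 1/c - 1/r ≤ 1/c := by linarith
              calc 2 * h * (1/c - 1/r) ≤ 2 * h * (1/c) :=
                    mul_le_mul_of_nonneg_left this (by linarith)
                _ = 2 * h / c := by ring
          _ = 2 * h ^ ((2:ℝ)/3) := by rw [← hhc]; ring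
      linarith
end

section
/- Let ψ : ℝ → ℝ be nondecreasing, let 0 < r < R < 1, and let A = ([−R,R]×(0,R]) \ ([−r,r]×(0,r)). Then ∫_A (ψ(x+y) − ψ(x−y))²/y² dx dy ≤ 2·(ψ(2R) − ψ(−2R))² + 8·Σ_{m=0}^∞ Σ_{ℓ ∈ S(m,r,R)} (ψ((ℓ+2)·R·2^{−m}) − ψ((ℓ−2)·R·2^{−m}))², where S(m,r,R) = {ℓ ∈ ℤ : r ≤ R·2^{−m}·|ℓ| ≤ R}. -/
/-!
Split the region into the centre block `[-r, r] × [r, R]` and the two side blocks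
`r < |x| ≤ R`. On the centre block the numerator is at most `(ψ (2R) - ψ (-2R))²` and
`∫_r^R dy / y² ≤ 1 / r`, which gives the first term. The left block is the right block for
the monotone function `t ↦ -ψ (-t)`, under `x ↦ -x` and `ℓ ↦ -ℓ`. The right block is cut
into dyadic strips `R 2^{-m-1} < y ≤ R 2^{-m}` and each strip into cells of width
`a = R 2^{-m}`; on the cell `(ℓ a - a, ℓ a]` monotonicity bounds the numerator by the
oscillation of `ψ` over `[(ℓ - 2) a, (ℓ + 2) a]` while `y² ≥ a² / 4`, and the cell has area
`a² / 2`.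
-/

open MeasureTheory Set
open scoped ENNReal

noncomputable def diffQuotSq (ψ : ℝ → ℝ) (p : ℝ × ℝ) : ℝ≥0∞ :=
  ENNReal.ofReal ((ψ (p.1 + p.2) - ψ (p.1 - p.2)) ^ 2 / p.2 ^ 2)

noncomputable def dyadicOsc (ψ : ℝ → ℝ) (r R : ℝ) (m : ℕ) (ℓ : ℤ) : ℝ≥0∞ :=
  if r ≤ R * |(ℓ : ℝ)| / 2 ^ m ∧ R * |(ℓ : ℝ)| / 2 ^ m ≤ R then
    ENNReal.ofReal ((ψ (((ℓ : ℝ) + 2) * R / 2 ^ m) - ψ (((ℓ : ℝ) - 2) * R / 2 ^ m)) ^ 2)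
  else 0

lemma diffQuotSq_le {ψ : ℝ → ℝ} (hψ : Monotone ψ) {x y lo hi b : ℝ}
    (hlo : lo ≤ x - y) (hhi : x + y ≤ hi) (hb : 0 < b) (hby : b ≤ y) :
    diffQuotSq ψ (x, y) ≤ ENNReal.ofReal ((ψ hi - ψ lo) ^ 2 / b ^ 2) := by
  have hdiff : 0 ≤ ψ (x + y) - ψ (x - y) := sub_nonneg.2 (hψ (by linarith))
  have hosc : ψ (x + y) - ψ (x - y) ≤ ψ hi - ψ lo := sub_le_sub (hψ hhi) (hψ hlo)
  exact ENNReal.ofReal_le_ofReal <| div_le_div₀ (by positivity)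
    (pow_le_pow_left₀ hdiff hosc 2) (by positivity) (pow_le_pow_left₀ hb.le hby 2)

lemma exists_mem_Ioc_div_two_pow {R y : ℝ} (hy : y ∈ Ioc 0 R) :
    ∃ m : ℕ, y ∈ Ioc (R / 2 ^ m / 2) (R / 2 ^ m) := by
  obtain ⟨m, hle, hlt⟩ := exists_nat_pow_near ((one_le_div hy.1).2 hy.2) one_lt_two
  refine ⟨m, ?_, ?_⟩
  · rw [div_div, ← pow_succ, div_lt_iff₀ (by positivity)]
    rwa [div_lt_iff₀ hy.1, mul_comm] at hlt
  · rw [le_div_iff₀ (by positivity)]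
    rwa [le_div_iff₀ hy.1, mul_comm] at hle

lemma mem_Ioc_ceil_mul {a : ℝ} (ha : 0 < a) (x : ℝ) :
    x ∈ Ioc (⌈x / a⌉ * a - a) (⌈x / a⌉ * a) := by
  constructor
  · have h := mul_lt_mul_of_pos_right (Int.ceil_lt_add_one (x / a)) ha
    rw [add_mul, div_mul_cancel₀ _ ha.ne'] at h
    linarith
  · rw [← div_le_iff₀ ha]
    exact Int.le_ceil _

lemma lintegral_diffQuotSq_cell_le {ψ : ℝ → ℝ} (hψ : Monotone ψ) {a : ℝ} (ha : 0 < a)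
    (t : ℝ) :
    ∫⁻ p in Ioc (t - a) t ×ˢ Ioc (a / 2) a, diffQuotSq ψ p ≤
      2 * ENNReal.ofReal ((ψ (t + 2 * a) - ψ (t - 2 * a)) ^ 2) := by
  set c := (ψ (t + 2 * a) - ψ (t - 2 * a)) ^ 2
  have hbound : ∀ p ∈ Ioc (t - a) t ×ˢ Ioc (a / 2) a,
      diffQuotSq ψ p ≤ ENNReal.ofReal (c / (a / 2) ^ 2) := by
    rintro ⟨x, y⟩ ⟨⟨hx₁, hx₂⟩, hy₁, hy₂⟩
    exact diffQuotSq_le hψ (by linarith) (by linarith) (by positivity) hy₁.le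
  calc ∫⁻ p in Ioc (t - a) t ×ˢ Ioc (a / 2) a, diffQuotSq ψ p
      ≤ ∫⁻ _ in Ioc (t - a) t ×ˢ Ioc (a / 2) a, ENNReal.ofReal (c / (a / 2) ^ 2) :=
        setLIntegral_mono' (measurableSet_Ioc.prod measurableSet_Ioc) hbound
    _ = ENNReal.ofReal (c / (a / 2) ^ 2) * (ENNReal.ofReal a * ENNReal.ofReal (a / 2)) := by
        rw [setLIntegral_const, Measure.volume_eq_prod, Measure.prod_prod, Real.volume_Ioc,
          Real.volume_Ioc, sub_sub_cancel, show a - a / 2 = a / 2 by ring]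
    _ = 2 * ENNReal.ofReal c := by
        rw [← ENNReal.ofReal_mul ha.le, ← ENNReal.ofReal_mul (by positivity),
          ← ENNReal.ofReal_ofNat 2, ← ENNReal.ofReal_mul zero_le_two]
        congr 1
        field_simp

lemma dyadic_index_bounds {r R x : ℝ} (hr : 0 ≤ r) {m : ℕ} {ℓ : ℤ} (hx : x ∈ Ioc r R)
    (hxℓ : x ∈ Ioc (ℓ * (R / 2 ^ m) - R / 2 ^ m) (ℓ * (R / 2 ^ m))) :
    r ≤ R * |(ℓ : ℝ)| / 2 ^ m ∧ R * |(ℓ : ℝ)| / 2 ^ m ≤ R := by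
  have h2m : (0 : ℝ) < 2 ^ m := by positivity
  have hR : 0 < R := hr.trans_lt (hx.1.trans_le hx.2)
  have hℓpos : (0 : ℝ) < ℓ :=
    pos_of_mul_pos_left (hr.trans_lt (hx.1.trans_le hxℓ.2)) (by positivity)
  rw [abs_of_pos hℓpos, mul_comm R, mul_div_assoc]
  refine ⟨hx.1.le.trans hxℓ.2, ?_⟩
  have hlt : ((ℓ - 1 : ℤ) : ℝ) < ((2 ^ m : ℤ) : ℝ) := by
    have : (ℓ - 1 : ℝ) * (R / 2 ^ m) < 2 ^ m * (R / 2 ^ m) := by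
      rw [mul_div_cancel₀ _ h2m.ne']
      linarith [hxℓ.1, hx.2]
    push_cast
    exact lt_of_mul_lt_mul_right this (by positivity)
  have hle : (ℓ : ℝ) ≤ 2 ^ m := by
    exact_mod_cast (show ℓ ≤ 2 ^ m by have := Int.cast_lt.1 hlt; omega)
  calc (ℓ : ℝ) * (R / 2 ^ m) ≤ 2 ^ m * (R / 2 ^ m) := by gcongr
    _ = R := mul_div_cancel₀ _ h2m.ne'

lemma lintegral_diffQuotSq_cell_le_dyadicOsc {ψ : ℝ → ℝ} (hψ : Monotone ψ) {r R : ℝ}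
    (hr : 0 ≤ r) (hR : 0 < R) (m : ℕ) (ℓ : ℤ) :
    ∫⁻ p in (Ioc (ℓ * (R / 2 ^ m) - R / 2 ^ m) (ℓ * (R / 2 ^ m)) ∩ Ioc r R) ×ˢ
        Ioc (R / 2 ^ m / 2) (R / 2 ^ m), diffQuotSq ψ p ≤
      2 * dyadicOsc ψ r R m ℓ := by
  unfold dyadicOsc
  split_ifs with hℓ
  · calc _ ≤ ∫⁻ p in Ioc (ℓ * (R / 2 ^ m) - R / 2 ^ m) (ℓ * (R / 2 ^ m)) ×ˢ
            Ioc (R / 2 ^ m / 2) (R / 2 ^ m), diffQuotSq ψ p :=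
          lintegral_mono_set (prod_mono inter_subset_left subset_rfl)
      _ ≤ _ := lintegral_diffQuotSq_cell_le hψ (by positivity) _
      _ = _ := by ring_nf
  · have hempty : Ioc (ℓ * (R / 2 ^ m) - R / 2 ^ m) (ℓ * (R / 2 ^ m)) ∩ Ioc r R = ∅ :=
      eq_empty_of_forall_notMem fun x hx ↦ hℓ (dyadic_index_bounds hr hx.2 hx.1)
    simp [hempty]

lemma lintegral_diffQuotSq_right_le {ψ : ℝ → ℝ} (hψ : Monotone ψ) {r R : ℝ}
    (hr : 0 ≤ r) (hR : 0 < R) :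
    ∫⁻ p in Ioc r R ×ˢ Ioc 0 R, diffQuotSq ψ p ≤
      2 * ∑' m : ℕ, ∑' ℓ : ℤ, dyadicOsc ψ r R m ℓ := by
  have hstrip (m : ℕ) : Ioc r R ×ˢ Ioc (R / 2 ^ m / 2) (R / 2 ^ m) ⊆
      ⋃ ℓ : ℤ, (Ioc (ℓ * (R / 2 ^ m) - R / 2 ^ m) (ℓ * (R / 2 ^ m)) ∩ Ioc r R) ×ˢ
        Ioc (R / 2 ^ m / 2) (R / 2 ^ m) := by
    rintro ⟨x, y⟩ ⟨hx, hy⟩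
    exact mem_iUnion.2 ⟨_, ⟨mem_Ioc_ceil_mul (by positivity) x, hx⟩, hy⟩
  have hstrips : Ioc r R ×ˢ Ioc 0 R ⊆
      ⋃ m : ℕ, Ioc r R ×ˢ Ioc (R / 2 ^ m / 2) (R / 2 ^ m) := by
    rintro ⟨x, y⟩ ⟨hx, hy⟩
    obtain ⟨m, hm⟩ := exists_mem_Ioc_div_two_pow hy
    exact mem_iUnion.2 ⟨m, hx, hm⟩
  calc ∫⁻ p in Ioc r R ×ˢ Ioc 0 R, diffQuotSq ψ p
      ≤ ∑' m : ℕ, ∫⁻ p in Ioc r R ×ˢ Ioc (R / 2 ^ m / 2) (R / 2 ^ m), diffQuotSq ψ p :=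
        (lintegral_mono_set hstrips).trans (lintegral_iUnion_le _ _)
    _ ≤ ∑' m : ℕ, ∑' ℓ : ℤ, 2 * dyadicOsc ψ r R m ℓ :=
        ENNReal.tsum_le_tsum fun m ↦ (lintegral_mono_set (hstrip m)).trans <|
          (lintegral_iUnion_le _ _).trans <| ENNReal.tsum_le_tsum fun ℓ ↦
            lintegral_diffQuotSq_cell_le_dyadicOsc hψ hr hR m ℓ
    _ = 2 * ∑' m : ℕ, ∑' ℓ : ℤ, dyadicOsc ψ r R m ℓ := by
        simp only [ENNReal.tsum_mul_left]

lemma diffQuotSq_reflect (ψ : ℝ → ℝ) (p : ℝ × ℝ) :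
    diffQuotSq (fun t ↦ -ψ (-t)) p = diffQuotSq ψ (Prod.map Neg.neg id p) := by
  simp only [diffQuotSq, Prod.map_fst, Prod.map_snd, id]
  ring_nf

lemma dyadicOsc_reflect (ψ : ℝ → ℝ) (r R : ℝ) (m : ℕ) (ℓ : ℤ) :
    dyadicOsc (fun t ↦ -ψ (-t)) r R m ℓ = dyadicOsc ψ r R m (-ℓ) := by
  simp only [dyadicOsc, Int.cast_neg, abs_neg]
  ring_nf

lemma lintegral_diffQuotSq_left_le {ψ : ℝ → ℝ} (hψ : Monotone ψ) {r R : ℝ}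
    (hr : 0 ≤ r) (hR : 0 < R) :
    ∫⁻ p in Ico (-R) (-r) ×ˢ Ioc 0 R, diffQuotSq ψ p ≤
      2 * ∑' m : ℕ, ∑' ℓ : ℤ, dyadicOsc ψ r R m ℓ := by
  let e : ℝ × ℝ ≃ᵐ ℝ × ℝ :=
    (MeasurableEquiv.neg ℝ).prodCongr (MeasurableEquiv.refl ℝ)
  have he : MeasurePreserving e volume volume :=
    (Measure.measurePreserving_neg volume).prod (MeasurePreserving.id volume)
  have hpre : e ⁻¹' (Ico (-R) (-r) ×ˢ Ioc 0 R) = Ioc r R ×ˢ Ioc 0 R := by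
    ext ⟨x, y⟩
    change (-x, y) ∈ Ico (-R) (-r) ×ˢ Ioc 0 R ↔ _
    simp [and_comm]
  have hφ : Monotone fun t ↦ -ψ (-t) := fun a b hab ↦ neg_le_neg (hψ (neg_le_neg hab))
  calc ∫⁻ p in Ico (-R) (-r) ×ˢ Ioc 0 R, diffQuotSq ψ p
      = ∫⁻ p in Ioc r R ×ˢ Ioc 0 R, diffQuotSq (fun t ↦ -ψ (-t)) p := by
        rw [← he.setLIntegral_comp_preimage_emb e.measurableEmbedding, hpre]
        exact lintegral_congr fun p ↦ (diffQuotSq_reflect ψ p).symm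
    _ ≤ 2 * ∑' m : ℕ, ∑' ℓ : ℤ, dyadicOsc (fun t ↦ -ψ (-t)) r R m ℓ :=
        lintegral_diffQuotSq_right_le hφ hr hR
    _ = 2 * ∑' m : ℕ, ∑' ℓ : ℤ, dyadicOsc ψ r R m ℓ := by
        simp only [dyadicOsc_reflect]
        congr 1
        exact tsum_congr fun m ↦ (Equiv.neg ℤ).tsum_eq (dyadicOsc ψ r R m)

lemma lintegral_inv_sq_Icc_le {r R : ℝ} (hr : 0 < r) :
    ∫⁻ y in Icc r R, ENNReal.ofReal (1 / y ^ 2) ≤ ENNReal.ofReal (1 / r) := by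
  have hrpow : ∀ y ∈ Ioi r, ENNReal.ofReal (1 / y ^ 2) = ENNReal.ofReal (y ^ (-2 : ℝ)) := by
    intro y hy
    rw [Real.rpow_neg (hr.trans hy).le, one_div, Real.rpow_two]
  calc ∫⁻ y in Icc r R, ENNReal.ofReal (1 / y ^ 2)
      ≤ ∫⁻ y in Ioi r, ENNReal.ofReal (1 / y ^ 2) := by
        rw [setLIntegral_congr Ioi_ae_eq_Ici]
        exact lintegral_mono_set Icc_subset_Ici_self
    _ = ENNReal.ofReal (∫ y in Ioi r, y ^ (-2 : ℝ)) := by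
        rw [setLIntegral_congr_fun measurableSet_Ioi hrpow,
          ofReal_integral_eq_lintegral_ofReal (integrableOn_Ioi_rpow_of_lt (by norm_num) hr)]
        exact (ae_restrict_mem measurableSet_Ioi).mono fun y hy ↦
          Real.rpow_nonneg (hr.trans hy).le _
    _ = ENNReal.ofReal (1 / r) := by
        rw [integral_Ioi_rpow_of_lt (by norm_num) hr]
        norm_num [Real.rpow_neg_one]

lemma lintegral_diffQuotSq_center_le {ψ : ℝ → ℝ} (hψ : Monotone ψ) {r R : ℝ}
    (hr : 0 < r) (hrR : r ≤ R) :
    ∫⁻ p in Icc (-r) r ×ˢ Icc r R, diffQuotSq ψ p ≤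
      ENNReal.ofReal (2 * (ψ (2 * R) - ψ (-(2 * R))) ^ 2) := by
  set M := (ψ (2 * R) - ψ (-(2 * R))) ^ 2
  have hM : 0 ≤ M := sq_nonneg _
  have hbound : ∀ p ∈ Icc (-r) r ×ˢ Icc r R,
      diffQuotSq ψ p ≤ ENNReal.ofReal M * ENNReal.ofReal (1 / p.2 ^ 2) := by
    rintro ⟨x, y⟩ ⟨⟨hx₁, hx₂⟩, hy₁, hy₂⟩
    rw [← ENNReal.ofReal_mul hM, mul_one_div]
    exact diffQuotSq_le hψ (by linarith) (by linarith) (hr.trans_le hy₁) le_rfl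
  calc ∫⁻ p in Icc (-r) r ×ˢ Icc r R, diffQuotSq ψ p
      ≤ ∫⁻ p in Icc (-r) r ×ˢ Icc r R, ENNReal.ofReal M * ENNReal.ofReal (1 / p.2 ^ 2) :=
        setLIntegral_mono' (measurableSet_Icc.prod measurableSet_Icc) hbound
    _ = (∫⁻ _ in Icc (-r) r, ENNReal.ofReal M) *
          ∫⁻ y in Icc r R, ENNReal.ofReal (1 / y ^ 2) := by
        rw [Measure.volume_eq_prod, ← Measure.prod_restrict]
        have hmeas : Measurable fun y : ℝ ↦ ENNReal.ofReal (1 / y ^ 2) := by fun_prop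
        exact lintegral_prod_mul aemeasurable_const hmeas.aemeasurable
    _ ≤ ENNReal.ofReal M * ENNReal.ofReal (2 * r) * ENNReal.ofReal (1 / r) := by
        rw [setLIntegral_const, Real.volume_Icc, sub_neg_eq_add, ← two_mul]
        gcongr
        exact lintegral_inv_sq_Icc_le hr
    _ = ENNReal.ofReal (2 * M) := by
        rw [← ENNReal.ofReal_mul hM, ← ENNReal.ofReal_mul (by positivity)]
        congr 1
        field_simp

theorem stmt12_general (ψ : ℝ → ℝ) (hmono : Monotone ψ) (r R : ℝ)
    (h1 : 0 < r) (h2 : r < R) :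
    ∫⁻ p in (Set.Icc (-R) R ×ˢ Set.Ioc 0 R) \ (Set.Icc (-r) r ×ˢ Set.Ioo 0 r),
        ENNReal.ofReal ((ψ (p.1 + p.2) - ψ (p.1 - p.2)) ^ 2 / p.2 ^ 2) ≤
      ENNReal.ofReal (2 * (ψ (2 * R) - ψ (-(2 * R))) ^ 2) +
        8 * ∑' m : ℕ, ∑' ℓ : ℤ,
          if r ≤ R * |(ℓ : ℝ)| / 2 ^ m ∧ R * |(ℓ : ℝ)| / 2 ^ m ≤ R then
            ENNReal.ofReal ((ψ (((ℓ : ℝ) + 2) * R / 2 ^ m) - ψ (((ℓ : ℝ) - 2) * R / 2 ^ m)) ^ 2)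
          else 0 := by
  have hR : 0 < R := h1.trans h2
  have hcover : (Icc (-R) R ×ˢ Ioc 0 R) \ (Icc (-r) r ×ˢ Ioo 0 r) ⊆
      Icc (-r) r ×ˢ Icc r R ∪ (Ico (-R) (-r) ×ˢ Ioc 0 R ∪ Ioc r R ×ˢ Ioc 0 R) := by
    rintro ⟨x, y⟩ ⟨⟨⟨hx₁, hx₂⟩, hy₁, hy₂⟩, hout⟩
    simp only [mem_union, mem_prod, mem_Icc, mem_Ico, mem_Ioc, mem_Ioo] at hout ⊢
    grind
  set S := ∑' m : ℕ, ∑' ℓ : ℤ, dyadicOsc ψ r R m ℓ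
  calc ∫⁻ p in (Icc (-R) R ×ˢ Ioc 0 R) \ (Icc (-r) r ×ˢ Ioo 0 r), diffQuotSq ψ p
      ≤ ∫⁻ p in Icc (-r) r ×ˢ Icc r R ∪
          (Ico (-R) (-r) ×ˢ Ioc 0 R ∪ Ioc r R ×ˢ Ioc 0 R), diffQuotSq ψ p :=
        lintegral_mono_set hcover
    _ ≤ (∫⁻ p in Icc (-r) r ×ˢ Icc r R, diffQuotSq ψ p) +
          ((∫⁻ p in Ico (-R) (-r) ×ˢ Ioc 0 R, diffQuotSq ψ p) +
            ∫⁻ p in Ioc r R ×ˢ Ioc 0 R, diffQuotSq ψ p) :=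
        (lintegral_union_le _ _ _).trans (add_le_add le_rfl (lintegral_union_le _ _ _))
    _ ≤ ENNReal.ofReal (2 * (ψ (2 * R) - ψ (-(2 * R))) ^ 2) + (2 * S + 2 * S) :=
        add_le_add (lintegral_diffQuotSq_center_le hmono h1 h2.le)
          (add_le_add (lintegral_diffQuotSq_left_le hmono h1.le hR)
            (lintegral_diffQuotSq_right_le hmono h1.le hR))
    _ ≤ ENNReal.ofReal (2 * (ψ (2 * R) - ψ (-(2 * R))) ^ 2) + 8 * S := by
        rw [← add_mul]
        gcongr
        norm_num

theorem stmt12 (ψ : ℝ → ℝ) (hmono : Monotone ψ) (r R : ℝ)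
    (h1 : 0 < r) (h2 : r < R) (h3 : R < 1) :
    ∫⁻ p in (Set.Icc (-R) R ×ˢ Set.Ioc 0 R) \ (Set.Icc (-r) r ×ˢ Set.Ioo 0 r),
        ENNReal.ofReal ((ψ (p.1 + p.2) - ψ (p.1 - p.2)) ^ 2 / p.2 ^ 2) ≤
      ENNReal.ofReal (2 * (ψ (2 * R) - ψ (-(2 * R))) ^ 2) +
        8 * ∑' m : ℕ, ∑' ℓ : ℤ,
          if r ≤ R * |(ℓ : ℝ)| / 2 ^ m ∧ R * |(ℓ : ℝ)| / 2 ^ m ≤ R then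
            ENNReal.ofReal ((ψ (((ℓ : ℝ) + 2) * R / 2 ^ m) - ψ (((ℓ : ℝ) - 2) * R / 2 ^ m)) ^ 2)
          else 0 :=
  stmt12_general ψ hmono r R h1 h2
end

section
/- Let μ be a finite Borel measure on ℝ. Then ∫_{[0,1]×(0,1]} μ([x−y, x+y])²/y² dx dy ≤ Σ_{n=0}^∞ 2^{n+2} · ∫₀¹ μ([x − 2^{−n}, x + 2^{−n}])² dx. -/
/-!
Cut `(0, 1]` into the dyadic shells `(2^{-(n+1)}, 2^{-n}]`. For `y` in the `n`-th shell,
`[x - y, x + y] ⊆ [x - 2^{-n}, x + 2^{-n}]` and `y⁻² < 4^{n+1}`; as the shell has length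
`2^{-(n+1)}`, it contributes at most `2^{n+1} ∫₀¹ μ([x - 2^{-n}, x + 2^{-n}])² dx`.
No measurability is needed, since the iterated integral always dominates the product integral.
-/

open MeasureTheory Set
open scoped ENNReal

lemma Ioc_zero_one_subset_iUnion_Ioc_inv_two_pow :
    Ioc (0 : ℝ) 1 ⊆ ⋃ n : ℕ, Ioc (((2 : ℝ) ^ (n + 1))⁻¹) (((2 : ℝ) ^ n)⁻¹) := by
  rintro y ⟨hy₀, hy₁⟩
  obtain ⟨n, hn⟩ := exists_nat_pow_near_of_lt_one hy₀ hy₁ (by norm_num : (0 : ℝ) < 2⁻¹)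
    (by norm_num)
  exact mem_iUnion.2 ⟨n, by simpa only [inv_pow, mem_Ioc] using hn⟩

lemma setLIntegral_prod_le_measure_mul_of_le {α β : Type*} [MeasurableSpace α]
    [MeasurableSpace β] {μ : Measure α} {ν : Measure β} [SFinite μ] [SFinite ν]
    {s : Set α} {t : Set β}
    (ht : MeasurableSet t) (hνt : ν t ≠ ∞) {f : α × β → ℝ≥0∞} {g : α → ℝ≥0∞}
    (hfg : ∀ x, ∀ y ∈ t, f (x, y) ≤ g x) :
    ∫⁻ z in s ×ˢ t, f z ∂μ.prod ν ≤ ν t * ∫⁻ x in s, g x ∂μ := by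
  rw [← Measure.prod_restrict, ← lintegral_const_mul' _ _ hνt]
  refine (lintegral_prod_le _).trans (lintegral_mono fun x => ?_)
  calc ∫⁻ y in t, f (x, y) ∂ν ≤ ∫⁻ _ in t, g x ∂ν := setLIntegral_mono' ht (hfg x)
    _ = ν t * g x := by rw [setLIntegral_const, mul_comm]

lemma measure_Icc_sq_div_le (μ : Measure ℝ) (x : ℝ) {r s y : ℝ} (hr : 0 < r)
    (hy : y ∈ Ioc r s) :
    μ (Icc (x - y) (x + y)) ^ 2 / ENNReal.ofReal (y ^ 2) ≤
      ENNReal.ofReal ((r ^ 2)⁻¹) * μ (Icc (x - s) (x + s)) ^ 2 := by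
  rw [mul_comm, ENNReal.ofReal_inv_of_pos (by positivity), ← div_eq_mul_inv]
  gcongr <;> linarith [hy.1, hy.2]

lemma setLIntegral_dyadic_shell_le (μ : Measure ℝ) (A : Set ℝ) (n : ℕ) :
    ∫⁻ p in A ×ˢ Ioc (((2 : ℝ) ^ (n + 1))⁻¹) (((2 : ℝ) ^ n)⁻¹),
        μ (Icc (p.1 - p.2) (p.1 + p.2)) ^ 2 / ENNReal.ofReal (p.2 ^ 2) ≤
      2 ^ (n + 1) * ∫⁻ x in A, μ (Icc (x - ((2 : ℝ) ^ n)⁻¹) (x + ((2 : ℝ) ^ n)⁻¹)) ^ 2 := by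
  have hr : (0 : ℝ) < ((2 : ℝ) ^ (n + 1))⁻¹ := by positivity
  rw [Measure.volume_eq_prod]
  refine (setLIntegral_prod_le_measure_mul_of_le measurableSet_Ioc measure_Ioc_lt_top.ne
    fun x y hy => measure_Icc_sq_div_le μ x hr hy).trans_eq ?_
  have hlength : ((2 : ℝ) ^ n)⁻¹ - ((2 : ℝ) ^ (n + 1))⁻¹ = ((2 : ℝ) ^ (n + 1))⁻¹ := by
    rw [pow_succ]; field_simp; ring
  rw [lintegral_const_mul' _ _ ENNReal.ofReal_ne_top, ← mul_assoc, Real.volume_Ioc, hlength,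
    ← ENNReal.ofReal_mul hr.le, show ((2 : ℝ) ^ (n + 1))⁻¹ * (((2 : ℝ) ^ (n + 1))⁻¹ ^ 2)⁻¹ =
      2 ^ (n + 1) by field_simp, ENNReal.ofReal_pow zero_le_two, ENNReal.ofReal_ofNat]

theorem stmt13_general (μ : Measure ℝ) :
    ∫⁻ p in Set.Icc (0 : ℝ) 1 ×ˢ Set.Ioc (0 : ℝ) 1,
        (μ (Set.Icc (p.1 - p.2) (p.1 + p.2))) ^ 2 / ENNReal.ofReal (p.2 ^ 2) ≤
      ∑' n : ℕ, 2 ^ (n + 2) *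
        ∫⁻ x in Set.Icc (0 : ℝ) 1,
          (μ (Set.Icc (x - ((2 : ℝ) ^ n)⁻¹) (x + ((2 : ℝ) ^ n)⁻¹))) ^ 2 := by
  calc _ ≤ ∑' n : ℕ, ∫⁻ p in Icc (0 : ℝ) 1 ×ˢ Ioc (((2 : ℝ) ^ (n + 1))⁻¹) (((2 : ℝ) ^ n)⁻¹),
          μ (Icc (p.1 - p.2) (p.1 + p.2)) ^ 2 / ENNReal.ofReal (p.2 ^ 2) := by
        refine (lintegral_mono_set ?_).trans (lintegral_iUnion_le _ _)
        rw [← prod_iUnion]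
        exact prod_mono_right Ioc_zero_one_subset_iUnion_Ioc_inv_two_pow
    _ ≤ _ := ENNReal.tsum_le_tsum fun n => (setLIntegral_dyadic_shell_le μ _ n).trans <| by
        gcongr <;> norm_num

theorem stmt13 (μ : Measure ℝ) [IsFiniteMeasure μ] :
    ∫⁻ p in Set.Icc (0 : ℝ) 1 ×ˢ Set.Ioc (0 : ℝ) 1,
        (μ (Set.Icc (p.1 - p.2) (p.1 + p.2))) ^ 2 / ENNReal.ofReal (p.2 ^ 2) ≤
      ∑' n : ℕ, 2 ^ (n + 2) *
        ∫⁻ x in Set.Icc (0 : ℝ) 1,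
          (μ (Set.Icc (x - ((2 : ℝ) ^ n)⁻¹) (x + ((2 : ℝ) ^ n)⁻¹))) ^ 2 :=
  stmt13_general μ
end

section
/- Let μ be a finite Borel measure on ℝ and n ∈ ℕ. Then ∫₀¹ μ([x − 2^{−n}, x + 2^{−n}])² dx ≤ 3 · 2^{−n} · μ([−1, 2]) · max_{1 ≤ k ≤ 2ⁿ} μ([(k−2)·2^{−n}, (k+1)·2^{−n}]). -/
open MeasureTheory
open scoped ENNReal

theorem stmt14 (μ : Measure ℝ) [IsFiniteMeasure μ] (n : ℕ) :
    ∫⁻ x in Set.Icc (0 : ℝ) 1,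
        (μ (Set.Icc (x - ((2 : ℝ) ^ n)⁻¹) (x + ((2 : ℝ) ^ n)⁻¹))) ^ 2 ≤
      3 * ((2 : ℝ≥0∞) ^ n)⁻¹ * μ (Set.Icc (-1 : ℝ) 2) *
        (Finset.Icc 1 (2 ^ n)).sup
          (fun k : ℕ => μ (Set.Icc (((k : ℝ) - 2) / 2 ^ n) (((k : ℝ) + 1) / 2 ^ n))) := by
  set ε : ℝ := ((2 : ℝ) ^ n)⁻¹ with hεdef
  have h2n : (0 : ℝ) < 2 ^ n := by positivity
  have hε0 : 0 < ε := by positivity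
  have hε1 : ε ≤ 1 := by
    rw [hεdef, inv_le_one_iff₀]; right; exact one_le_pow₀ one_le_two
  set M := (Finset.Icc 1 (2 ^ n)).sup
      (fun k : ℕ => μ (Set.Icc (((k : ℝ) - 2) / 2 ^ n) (((k : ℝ) + 1) / 2 ^ n))) with hMdef
  have hMtop : M ≠ ⊤ := by
    refine (lt_top_iff_ne_top.mp ?_)
    exact Finset.sup_lt_iff (by simp) |>.2 fun k _ => measure_lt_top μ _
  -- pointwise bound
  have key : ∀ x ∈ Set.Icc (0 : ℝ) 1, μ (Set.Icc (x - ε) (x + ε)) ≤ M := by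
    intro x hx
    obtain ⟨hx0, hx1⟩ := hx
    set k : ℕ := max 1 ⌈x * 2 ^ n⌉₊ with hkdef
    have hk1 : 1 ≤ k := le_max_left _ _
    have hk2 : k ≤ 2 ^ n := by
      refine max_le (Nat.one_le_two_pow) ?_
      rw [Nat.ceil_le]
      push_cast
      calc x * 2 ^ n ≤ 1 * 2 ^ n := by gcongr
        _ = 2 ^ n := one_mul _
    have hxu : x ≤ (k : ℝ) / 2 ^ n := by
      rw [le_div_iff₀ h2n]
      calc x * 2 ^ n ≤ ⌈x * 2 ^ n⌉₊ := Nat.le_ceil _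
        _ ≤ (k : ℝ) := Nat.cast_le.mpr (le_max_right 1 ⌈x * 2 ^ n⌉₊)
    have hxl : ((k : ℝ) - 1) / 2 ^ n ≤ x := by
      rw [div_le_iff₀ h2n]
      rcases le_or_gt ⌈x * 2 ^ n⌉₊ 1 with h | h
      · have hk : k = 1 := by omega
        rw [hk]; push_cast; nlinarith
      · have hk : k = ⌈x * 2 ^ n⌉₊ := by omega
        rw [hk]
        have := Nat.ceil_lt_add_one (mul_nonneg hx0 (le_of_lt h2n)) (a := x * 2 ^ n)
        linarith
    have hsub : Set.Icc (x - ε) (x + ε) ⊆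
        Set.Icc (((k : ℝ) - 2) / 2 ^ n) (((k : ℝ) + 1) / 2 ^ n) := by
      apply Set.Icc_subset_Icc
      · have h2 : ((k : ℝ) - 2) / 2 ^ n = ((k : ℝ) - 1) / 2 ^ n - ε := by
          rw [hεdef]; field_simp; ring
        rw [h2]; linarith
      · have h2 : ((k : ℝ) + 1) / 2 ^ n = (k : ℝ) / 2 ^ n + ε := by
          rw [hεdef]; field_simp
        rw [h2]; linarith
    calc μ (Set.Icc (x - ε) (x + ε)) ≤
        μ (Set.Icc (((k : ℝ) - 2) / 2 ^ n) (((k : ℝ) + 1) / 2 ^ n)) := measure_mono hsub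
      _ ≤ M := Finset.le_sup (f := fun k : ℕ => μ (Set.Icc (((k : ℝ) - 2) / 2 ^ n) (((k : ℝ) + 1) / 2 ^ n))) (Finset.mem_Icc.mpr ⟨hk1, hk2⟩)
  -- representation via indicator on product
  set S : Set (ℝ × ℝ) := {p : ℝ × ℝ | p.1 - ε ≤ p.2 ∧ p.2 ≤ p.1 + ε} with hSdef
  have hS : MeasurableSet S := by
    apply MeasurableSet.inter
    · exact measurableSet_le (measurable_fst.sub measurable_const) measurable_snd
    · exact measurableSet_le measurable_snd (measurable_fst.add measurable_const)
  have hind : ∀ x y : ℝ, S.indicator (1 : ℝ × ℝ → ℝ≥0∞) (x, y) =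
      (Set.Icc (x - ε) (x + ε)).indicator 1 y := by
    intro x y
    simp only [Set.indicator, hSdef, Set.mem_setOf_eq, Set.mem_Icc, Pi.one_apply]
  have hind' : ∀ x y : ℝ, S.indicator (1 : ℝ × ℝ → ℝ≥0∞) (x, y) =
      (Set.Icc (y - ε) (y + ε)).indicator 1 x := by
    intro x y
    simp only [Set.indicator, hSdef, Set.mem_setOf_eq, Set.mem_Icc, Pi.one_apply]
    congr 1
    simp only [eq_iff_iff]
    constructor <;> intro h <;> constructor <;> linarith [h.1, h.2]
  have hrepr : ∀ x : ℝ, μ (Set.Icc (x - ε) (x + ε)) =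
      ∫⁻ y, S.indicator (1 : ℝ × ℝ → ℝ≥0∞) (x, y) ∂μ := by
    intro x
    simp only [hind]
    rw [lintegral_indicator_one measurableSet_Icc]
  have hmeasf : Measurable fun x : ℝ => μ (Set.Icc (x - ε) (x + ε)) := by
    simp only [hrepr]
    exact Measurable.lintegral_prod_right (f := fun x y => S.indicator 1 (x, y))
      (measurable_one.indicator hS)
  -- Fubini bound on the first-moment integral
  have hfub : ∫⁻ x in Set.Icc (0 : ℝ) 1, μ (Set.Icc (x - ε) (x + ε)) ≤
      2 * ((2 : ℝ≥0∞) ^ n)⁻¹ * μ (Set.Icc (-1 : ℝ) 2) := by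
    have hswap : ∫⁻ x in Set.Icc (0 : ℝ) 1, μ (Set.Icc (x - ε) (x + ε)) =
        ∫⁻ y, ∫⁻ x in Set.Icc (0 : ℝ) 1, S.indicator (1 : ℝ × ℝ → ℝ≥0∞) (x, y) ∂volume ∂μ := by
      calc ∫⁻ x in Set.Icc (0 : ℝ) 1, μ (Set.Icc (x - ε) (x + ε))
          = ∫⁻ x in Set.Icc (0 : ℝ) 1, ∫⁻ y, S.indicator (1 : ℝ × ℝ → ℝ≥0∞) (x, y) ∂μ := by
            simp only [hrepr]
        _ = _ := lintegral_lintegral_swap ((measurable_one.indicator hS).aemeasurable)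
    rw [hswap]
    have hofr : ENNReal.ofReal (2 * ε) = 2 * ((2 : ℝ≥0∞) ^ n)⁻¹ := by
      rw [ENNReal.ofReal_mul (by norm_num), hεdef,
        ENNReal.ofReal_inv_of_pos h2n, ENNReal.ofReal_pow (by norm_num)]
      norm_num
    have hinner : ∀ y : ℝ,
        (∫⁻ x in Set.Icc (0 : ℝ) 1, S.indicator (1 : ℝ × ℝ → ℝ≥0∞) (x, y) ∂volume) ≤
        (Set.Icc (-1 : ℝ) 2).indicator (fun _ => (2 : ℝ≥0∞) * ((2 : ℝ≥0∞) ^ n)⁻¹) y := by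
      intro y
      have hval : (∫⁻ x in Set.Icc (0 : ℝ) 1, S.indicator (1 : ℝ × ℝ → ℝ≥0∞) (x, y) ∂volume) =
          volume (Set.Icc (y - ε) (y + ε) ∩ Set.Icc (0 : ℝ) 1) := by
        simp only [hind']
        rw [lintegral_indicator_one measurableSet_Icc,
          Measure.restrict_apply measurableSet_Icc]
      rw [hval]
      rcases em (y ∈ Set.Icc (-1 : ℝ) 2) with hy | hy
      · rw [Set.indicator_of_mem hy]
        calc volume (Set.Icc (y - ε) (y + ε) ∩ Set.Icc (0 : ℝ) 1)
            ≤ volume (Set.Icc (y - ε) (y + ε)) := measure_mono Set.inter_subset_left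
          _ = ENNReal.ofReal (2 * ε) := by rw [Real.volume_Icc]; ring_nf
          _ = _ := hofr
      · rw [Set.indicator_of_notMem hy]
        have hempty : Set.Icc (y - ε) (y + ε) ∩ Set.Icc (0 : ℝ) 1 = ∅ := by
          simp only [Set.mem_Icc, not_and_or, not_le] at hy
          ext z
          simp only [Set.mem_inter_iff, Set.mem_Icc, Set.mem_empty_iff_false, iff_false]
          rintro ⟨⟨h1, h2⟩, h3, h4⟩
          rcases hy with h | h <;> linarith
        rw [hempty]; simp
    calc ∫⁻ y, ∫⁻ x in Set.Icc (0 : ℝ) 1, S.indicator (1 : ℝ × ℝ → ℝ≥0∞) (x, y) ∂volume ∂μ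
        ≤ ∫⁻ y, (Set.Icc (-1 : ℝ) 2).indicator
            (fun _ => (2 : ℝ≥0∞) * ((2 : ℝ≥0∞) ^ n)⁻¹) y ∂μ := lintegral_mono hinner
      _ = 2 * ((2 : ℝ≥0∞) ^ n)⁻¹ * μ (Set.Icc (-1 : ℝ) 2) := by
          rw [lintegral_indicator_const measurableSet_Icc]
  -- combine
  calc ∫⁻ x in Set.Icc (0 : ℝ) 1, (μ (Set.Icc (x - ε) (x + ε))) ^ 2
      ≤ ∫⁻ x in Set.Icc (0 : ℝ) 1, M * μ (Set.Icc (x - ε) (x + ε)) := by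
        refine setLIntegral_mono (hmeasf.const_mul M) fun x hx => ?_
        rw [sq]
        exact mul_le_mul_left (key x hx) _
    _ = M * ∫⁻ x in Set.Icc (0 : ℝ) 1, μ (Set.Icc (x - ε) (x + ε)) :=
        lintegral_const_mul' _ _ hMtop
    _ ≤ M * (2 * ((2 : ℝ≥0∞) ^ n)⁻¹ * μ (Set.Icc (-1 : ℝ) 2)) := mul_le_mul_right hfub _
    _ = 2 * ((2 : ℝ≥0∞) ^ n)⁻¹ * μ (Set.Icc (-1 : ℝ) 2) * M := by ring
    _ ≤ 3 * ((2 : ℝ≥0∞) ^ n)⁻¹ * μ (Set.Icc (-1 : ℝ) 2) * M := by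
        gcongr
        norm_num
end

section
/- Let μ be a finite Borel measure on ℝ and suppose there exist constants C, c > 0 such that μ(I) ≤ C·|I|^c for every closed subinterval I of [−1, 2], where |I| denotes the length of I. Then ∫_{[0,1]×(0,1]} μ([x−y, x+y])²/y² dx dy < ∞. -/
open MeasureTheory

lemma meas_key15 (μ : Measure ℝ) [SFinite μ] :
    Measurable (fun p : ℝ × ℝ => μ (Set.Icc (p.1 - p.2) (p.1 + p.2))) := by
  have hS : MeasurableSet {q : (ℝ × ℝ) × ℝ | q.1.1 - q.1.2 ≤ q.2 ∧ q.2 ≤ q.1.1 + q.1.2} := by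
    rw [Set.setOf_and]
    exact (measurableSet_le (by fun_prop) (by fun_prop)).inter
      (measurableSet_le (by fun_prop) (by fun_prop))
  have h := measurable_measure_prodMk_left (ν := μ) hS
  have heq : (fun p : ℝ × ℝ => μ (Set.Icc (p.1 - p.2) (p.1 + p.2))) =
      fun p : ℝ × ℝ =>
        μ (Prod.mk p ⁻¹' {q : (ℝ × ℝ) × ℝ | q.1.1 - q.1.2 ≤ q.2 ∧ q.2 ≤ q.1.1 + q.1.2}) := by
    rfl
  rw [heq]
  exact h

lemma inner_int15 (μ : Measure ℝ) [IsFiniteMeasure μ] {y : ℝ} (hy : 0 ≤ y) :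
    ∫⁻ x : ℝ, μ (Set.Icc (x - y) (x + y)) = ENNReal.ofReal (2 * y) * μ Set.univ := by
  set S : Set (ℝ × ℝ) := {q : ℝ × ℝ | q.1 - y ≤ q.2 ∧ q.2 ≤ q.1 + y} with hSdef
  have hS : MeasurableSet S := by
    rw [hSdef, Set.setOf_and]
    exact (measurableSet_le (by fun_prop) (by fun_prop)).inter
      (measurableSet_le (by fun_prop) (by fun_prop))
  have h1 : ∀ x : ℝ, μ (Set.Icc (x - y) (x + y)) = ∫⁻ t, S.indicator 1 (x, t) ∂μ := by
    intro x
    have : (fun t => S.indicator (1 : ℝ × ℝ → ENNReal) (x, t)) =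
        (Set.Icc (x - y) (x + y)).indicator (1 : ℝ → ENNReal) := by
      funext t
      simp [Set.indicator_apply, hSdef, Set.mem_Icc]
    rw [this, lintegral_indicator_one measurableSet_Icc]
  calc ∫⁻ x : ℝ, μ (Set.Icc (x - y) (x + y))
      = ∫⁻ x : ℝ, ∫⁻ t, S.indicator 1 (x, t) ∂μ := by simp_rw [h1]
    _ = ∫⁻ t, ∫⁻ x : ℝ, S.indicator 1 (x, t) ∂volume ∂μ := by
        apply lintegral_lintegral_swap
        exact (measurable_one.indicator hS).aemeasurable
    _ = ∫⁻ _t, ENNReal.ofReal (2 * y) ∂μ := by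
        apply lintegral_congr
        intro t
        have : (fun x : ℝ => S.indicator (1 : ℝ × ℝ → ENNReal) (x, t)) =
            (Set.Icc (t - y) (t + y)).indicator (1 : ℝ → ENNReal) := by
          funext x
          simp only [Set.indicator_apply, hSdef, Set.mem_setOf_eq, Set.mem_Icc]
          exact if_congr ⟨fun h => ⟨by linarith [h.2], by linarith [h.1]⟩,
            fun h => ⟨by linarith [h.1], by linarith [h.2]⟩⟩ rfl rfl
        rw [this, lintegral_indicator_one measurableSet_Icc, Real.volume_Icc]
        congr 1
        ring
    _ = ENNReal.ofReal (2 * y) * μ Set.univ := lintegral_const _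

theorem stmt15 (μ : Measure ℝ) [IsFiniteMeasure μ] (C c : ℝ) (hC : 0 < C) (hc : 0 < c)
    (hbound : ∀ a b : ℝ, -1 ≤ a → a ≤ b → b ≤ 2 →
      μ (Set.Icc a b) ≤ ENNReal.ofReal (C * (b - a) ^ c)) :
    ∫⁻ p in Set.Icc (0 : ℝ) 1 ×ˢ Set.Ioc (0 : ℝ) 1,
        (μ (Set.Icc (p.1 - p.2) (p.1 + p.2))) ^ 2 / ENNReal.ofReal (p.2 ^ 2) < ⊤ := by
  set g : ℝ × ℝ → ENNReal := fun p =>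
    ENNReal.ofReal (C * 2 ^ c * p.2 ^ (c - 2)) * μ (Set.Icc (p.1 - p.2) (p.1 + p.2)) with hgdef
  have hgmeas : Measurable g := by
    apply Measurable.mul _ (meas_key15 μ)
    exact ENNReal.measurable_ofReal.comp (by measurability)
  -- pointwise bound on the set
  have hpt : ∀ p ∈ Set.Icc (0 : ℝ) 1 ×ˢ Set.Ioc (0 : ℝ) 1,
      (μ (Set.Icc (p.1 - p.2) (p.1 + p.2))) ^ 2 / ENNReal.ofReal (p.2 ^ 2) ≤ g p := by
    rintro ⟨x, y⟩ ⟨hx, hy⟩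
    simp only [Set.mem_Icc] at hx
    simp only [Set.mem_Ioc] at hy
    have hy0 : 0 < y := hy.1
    have hb : μ (Set.Icc (x - y) (x + y)) ≤ ENNReal.ofReal (C * (2 * y) ^ c) := by
      have h := hbound (x - y) (x + y) (by linarith [hx.1, hy.2]) (by linarith)
        (by linarith [hx.2, hy.2])
      simpa [show x + y - (x - y) = 2 * y by ring] using h
    have h2 : y ^ (c - 2) * y * y = y ^ c := by
      have h1' := Real.rpow_add hy0 (c - 2) 1
      rw [Real.rpow_one, show c - 2 + 1 = c - 1 by ring] at h1'
      have h2' := Real.rpow_add hy0 (c - 1) 1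
      rw [Real.rpow_one, show c - 1 + 1 = c by ring] at h2'
      rw [← h1', ← h2']
    have hreal : C * 2 ^ c * y ^ (c - 2) * y ^ (2 : ℕ) = C * (2 * y) ^ c := by
      rw [Real.mul_rpow (by norm_num : (0:ℝ) ≤ 2) hy0.le]
      linear_combination (C * 2 ^ c) * h2
    rw [ENNReal.div_le_iff (ne_of_gt (ENNReal.ofReal_pos.mpr (by positivity)))
      ENNReal.ofReal_ne_top]
    calc (μ (Set.Icc (x - y) (x + y))) ^ 2
        = μ (Set.Icc (x - y) (x + y)) * μ (Set.Icc (x - y) (x + y)) := sq _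
      _ ≤ ENNReal.ofReal (C * (2 * y) ^ c) * μ (Set.Icc (x - y) (x + y)) :=
          mul_le_mul_left hb _
      _ = g (x, y) * ENNReal.ofReal (y ^ 2) := by
          rw [hgdef]
          simp only
          rw [← hreal, ENNReal.ofReal_mul (by positivity)]
          ring
  refine lt_of_le_of_lt (setLIntegral_mono hgmeas hpt) ?_
  -- finiteness of the dominating integral
  rw [show (volume : Measure (ℝ × ℝ)) = (volume : Measure ℝ).prod volume from
    Measure.volume_eq_prod ℝ ℝ, ← Measure.prod_restrict,
    MeasureTheory.lintegral_prod_symm g hgmeas.aemeasurable]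
  have houter : ∀ y ∈ Set.Ioc (0 : ℝ) 1,
      ∫⁻ x in Set.Icc (0 : ℝ) 1, g (x, y) ≤
        μ Set.univ * ENNReal.ofReal (2 * C * 2 ^ c) * ENNReal.ofReal (y ^ (c - 1)) := by
    intro y hy
    have hy0 : 0 < y := hy.1
    simp only [hgdef]
    have hy1 : y ^ (c - 2) * y = y ^ (c - 1) := by
      have h1' := Real.rpow_add hy0 (c - 2) 1
      rw [Real.rpow_one, show c - 2 + 1 = c - 1 by ring] at h1'
      exact h1'.symm
    calc ∫⁻ x in Set.Icc (0 : ℝ) 1,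
          ENNReal.ofReal (C * 2 ^ c * y ^ (c - 2)) * μ (Set.Icc (x - y) (x + y))
        = ENNReal.ofReal (C * 2 ^ c * y ^ (c - 2)) *
            ∫⁻ x in Set.Icc (0 : ℝ) 1, μ (Set.Icc (x - y) (x + y)) := by
          exact lintegral_const_mul' _ _ ENNReal.ofReal_ne_top
      _ ≤ ENNReal.ofReal (C * 2 ^ c * y ^ (c - 2)) *
            ∫⁻ x : ℝ, μ (Set.Icc (x - y) (x + y)) :=
          mul_le_mul_right (setLIntegral_le_lintegral _ _) _
      _ = ENNReal.ofReal (C * 2 ^ c * y ^ (c - 2)) *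
            (ENNReal.ofReal (2 * y) * μ Set.univ) := by rw [inner_int15 μ hy0.le]
      _ = μ Set.univ * ENNReal.ofReal (2 * C * 2 ^ c) * ENNReal.ofReal (y ^ (c - 1)) := by
          rw [← mul_assoc, ← ENNReal.ofReal_mul (by positivity),
            show C * 2 ^ c * y ^ (c - 2) * (2 * y) = 2 * C * 2 ^ c * (y ^ (c - 1)) by
              linear_combination (2 * C * 2 ^ c) * hy1,
            ENNReal.ofReal_mul (by positivity)]
          ring
  have hfin : ∫⁻ y in Set.Ioc (0 : ℝ) 1, ENNReal.ofReal (y ^ (c - 1)) < ⊤ := by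
    have hint : IntegrableOn (fun y : ℝ => y ^ (c - 1)) (Set.Ioo 0 1) :=
      (intervalIntegral.integrableOn_Ioo_rpow_iff zero_lt_one).mpr (by linarith)
    rw [← MeasureTheory.restrict_Ioo_eq_restrict_Ioc]
    exact hint.lintegral_lt_top
  calc ∫⁻ y in Set.Ioc (0 : ℝ) 1, ∫⁻ x in Set.Icc (0 : ℝ) 1, g (x, y)
      ≤ ∫⁻ y in Set.Ioc (0 : ℝ) 1,
          μ Set.univ * ENNReal.ofReal (2 * C * 2 ^ c) * ENNReal.ofReal (y ^ (c - 1)) :=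
        setLIntegral_mono' measurableSet_Ioc houter
    _ = μ Set.univ * ENNReal.ofReal (2 * C * 2 ^ c) *
          ∫⁻ y in Set.Ioc (0 : ℝ) 1, ENNReal.ofReal (y ^ (c - 1)) :=
        lintegral_const_mul' _ _
          (ENNReal.mul_ne_top (measure_ne_top μ _) ENNReal.ofReal_ne_top)
    _ < ⊤ := ENNReal.mul_lt_top
        (ENNReal.mul_lt_top (measure_lt_top μ _) ENNReal.ofReal_lt_top) hfin
end

section
/- There exists an absolute constant C > 0 such that for all σ > 0, d > 0, all a ≤ −d and all u ≥ 0, one has Φ((a − u)/σ) ≤ C · e^{−a²/(2σ²)} · Φ((d − u)/σ), where Φ denotes the cumulative distribution function of the standard Gaussian distribution N(0,1) on ℝ. -/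
/-!
Shifting the variable by `δ = y - x ≥ 0` turns `Φ(x)` into the integral over `(-∞, y]` of the
density `φ(t - δ) = e^{δ t - δ²/2} φ(t) ≤ e^{(y² - x²)/2} φ(t)`, so `Φ(x) ≤ e^{(y² - x²)/2} Φ(y)`
whenever `x ≤ y`; that is, the Mills ratio `Φ / φ` is nondecreasing. Applied with `y` replaced
by `min y 0`, this gives the theorem with `C = 1`.
-/

open MeasureTheory ProbabilityTheory

/-- The cumulative distribution function of the standard Gaussian distribution `N(0,1)`. -/
noncomputable def stdGaussCDF (x : ℝ) : ℝ :=
  ((gaussianReal 0 1) (Set.Iic x)).toReal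

open Set Real NNReal

lemma gaussianPDFReal_eq_exp_mul_gaussianPDFReal_zero (μ : ℝ) (v : ℝ≥0) (t : ℝ) :
    gaussianPDFReal μ v t = exp ((μ * t - μ ^ 2 / 2) / v) * gaussianPDFReal 0 v t := by
  rcases eq_or_ne v 0 with rfl | hv
  · simp
  simp only [gaussianPDFReal, sub_zero]
  rw [mul_left_comm, ← exp_add]
  congr 2
  field_simp
  ring

lemma gaussianReal_real_eq_integral (μ : ℝ) {v : ℝ≥0} (hv : v ≠ 0) (s : Set ℝ) :
    (gaussianReal μ v).real s = ∫ t in s, gaussianPDFReal μ v t := by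
  rw [measureReal_def, gaussianReal_apply_eq_integral μ hv,
    ENNReal.toReal_ofReal (integral_nonneg (gaussianPDFReal_nonneg μ v))]

lemma stdGaussCDF_nonneg (x : ℝ) : 0 ≤ stdGaussCDF x := ENNReal.toReal_nonneg

lemma stdGaussCDF_mono : Monotone stdGaussCDF := fun _ _ hxy =>
  measureReal_mono (Iic_subset_Iic.2 hxy)

lemma stdGaussCDF_eq_gaussianReal_Iic_add (x δ : ℝ) :
    stdGaussCDF x = (gaussianReal δ 1).real (Iic (x + δ)) := by
  rw [← zero_add δ, ← gaussianReal_map_add_const, map_measureReal_apply (by fun_prop)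
    measurableSet_Iic, zero_add, preimage_add_const_Iic, add_sub_cancel_right]
  rfl

lemma stdGaussCDF_le_exp_mul_stdGaussCDF {x y : ℝ} (hxy : x ≤ y) :
    stdGaussCDF x ≤ exp ((y ^ 2 - x ^ 2) / 2) * stdGaussCDF y := by
  have hpdf : ∀ t ∈ Iic y, gaussianPDFReal (y - x) 1 t
      ≤ exp ((y ^ 2 - x ^ 2) / 2) * gaussianPDFReal 0 1 t := fun t ht => by
    rw [gaussianPDFReal_eq_exp_mul_gaussianPDFReal_zero]
    refine mul_le_mul_of_nonneg_right (exp_le_exp.2 ?_) (gaussianPDFReal_nonneg _ _ _)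
    simp only [NNReal.coe_one, div_one]
    nlinarith [mem_Iic.1 ht]
  calc stdGaussCDF x = ∫ t in Iic y, gaussianPDFReal (y - x) 1 t := by
        rw [stdGaussCDF_eq_gaussianReal_Iic_add x (y - x), add_sub_cancel,
          gaussianReal_real_eq_integral _ one_ne_zero]
    _ ≤ ∫ t in Iic y, exp ((y ^ 2 - x ^ 2) / 2) * gaussianPDFReal 0 1 t :=
        setIntegral_mono_on (integrable_gaussianPDFReal _ _).integrableOn
          ((integrable_gaussianPDFReal _ _).const_mul _).integrableOn measurableSet_Iic hpdf
    _ = exp ((y ^ 2 - x ^ 2) / 2) * stdGaussCDF y := by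
        rw [integral_const_mul, ← gaussianReal_real_eq_integral _ one_ne_zero]
        rfl

lemma stdGaussCDF_le_exp_neg_sq_mul_stdGaussCDF {α x y : ℝ} (hα : 0 ≤ α) (hx : x ≤ -α)
    (hxy : x + α ≤ y) : stdGaussCDF x ≤ exp (-α ^ 2 / 2) * stdGaussCDF y := by
  have hy' : x + α ≤ min y 0 := le_min hxy (by linarith)
  calc stdGaussCDF x ≤ exp ((min y 0 ^ 2 - x ^ 2) / 2) * stdGaussCDF (min y 0) :=
        stdGaussCDF_le_exp_mul_stdGaussCDF (by linarith)
    _ ≤ exp (-α ^ 2 / 2) * stdGaussCDF y := by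
        refine mul_le_mul (exp_le_exp.2 ?_) (stdGaussCDF_mono (min_le_left y 0))
          (stdGaussCDF_nonneg _) (exp_pos _).le
        nlinarith [min_le_right y 0]

theorem stmt16 :
    ∃ C : ℝ, 0 < C ∧ ∀ σ : ℝ, 0 < σ → ∀ d : ℝ, 0 < d → ∀ a : ℝ, a ≤ -d → ∀ u : ℝ, 0 ≤ u →
      stdGaussCDF ((a - u) / σ) ≤
        C * Real.exp (-(a ^ 2) / (2 * σ ^ 2)) * stdGaussCDF ((d - u) / σ) := by
  refine ⟨1, one_pos, fun σ hσ d hd a ha u hu => ?_⟩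
  have hexp : -(a ^ 2) / (2 * σ ^ 2) = -(-a / σ) ^ 2 / 2 := by
    field_simp
  rw [one_mul, hexp]
  refine stdGaussCDF_le_exp_neg_sq_mul_stdGaussCDF (div_nonneg (by linarith) hσ.le) ?_ ?_
  · rw [neg_div, neg_neg]
    gcongr
    linarith
  · rw [← add_div, div_le_div_iff_of_pos_right hσ]
    linarith
end

section
/- There exists an absolute constant C > 0 such that the following holds. Let d, σ > 0, let u > d, let (ξ_i)_{i≥1} be an i.i.d. sequence of standard Gaussian N(0,1) random variables, and define the random walk Y_m = u − d·m + σ·Σ_{i=1}^m ξ_i for m ≥ 0. Let S = inf{m ≥ 1 : Y_m ≤ d} (which is finite almost surely). Then for every a ≤ −d, P(Y_S < a) ≤ C · e^{−a²/(2σ²)}. -/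
/-!
Split `{Y_S < a}` according to the last time `n = S - 1` before the passage and the band `k` with
`Y_n - d ∈ [σk, σ(k+1))`. The overshoot then forces `ξ_{n+1} < a/σ - k`, an event independent of
the past whose probability is at most `exp(-k²/2) · exp(-a²/(2σ²))`.
To control `∑ₙ P(band n k)`, let `p = P(ξ < -1)`: with conditional probability at least `p^(k+1)`
the next `k+1` increments are all below `d/σ - 1`, so the walk drops by more than `σ` per step and
passes below `d` within `k+1` steps. Since the passage time is unique, every path lies in at most
`k+1` of these events, hence `∑ₙ P(band n k) ≤ (k+1)/p^(k+1)`, and the Gaussian factor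
`exp(-k²/2)` makes the resulting series in `k` converge.
-/

open MeasureTheory ProbabilityTheory Real Filter Topology
open scoped ENNReal

lemma gaussianReal_Iio_le_exp {t : ℝ} (ht : t ≤ 0) :
    gaussianReal 0 1 (Set.Iio t) ≤ ENNReal.ofReal (exp (-t ^ 2 / 2)) := by
  have hmgf : mgf id (gaussianReal 0 1) t = exp (t ^ 2 / 2) := by
    simp [mgf_gaussianReal (p := gaussianReal 0 1) (X := id) Measure.map_id]
  have h := measure_le_le_exp_mul_mgf (X := id) (μ := gaussianReal 0 1) t ht
    (integrable_exp_mul_gaussianReal t)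
  rw [hmgf, ← exp_add, show -t * t + t ^ 2 / 2 = -t ^ 2 / 2 by ring] at h
  calc gaussianReal 0 1 (Set.Iio t) ≤ gaussianReal 0 1 {x | id x ≤ t} :=
        measure_mono (Set.Iio_subset_Iic_self : Set.Iio t ⊆ Set.Iic t)
    _ ≤ ENNReal.ofReal (exp (-t ^ 2 / 2)) :=
        (ENNReal.le_ofReal_iff_toReal_le (measure_ne_top _ _) (exp_pos _).le).2 h

lemma measureReal_gaussianReal_Iio_pos (t : ℝ) : 0 < (gaussianReal 0 1).real (Set.Iio t) :=
  ENNReal.toReal_pos (fun h => by simpa using gaussianReal_absolutelyContinuous' 0 one_ne_zero h)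
    (measure_ne_top _ _)

lemma gaussianReal_Iio_div_sub_natCast_le {a σ : ℝ} (hσ : 0 < σ) (ha : a ≤ 0) (k : ℕ) :
    gaussianReal 0 1 (Set.Iio (a / σ - k)) ≤
      ENNReal.ofReal (exp (-(k : ℝ) ^ 2 / 2) * exp (-a ^ 2 / (2 * σ ^ 2))) := by
  have has : a / σ ≤ 0 := div_nonpos_of_nonpos_of_nonneg ha hσ.le
  refine (gaussianReal_Iio_le_exp (by linarith [k.cast_nonneg (α := ℝ)])).trans
    (ENNReal.ofReal_le_ofReal ?_)
  rw [← exp_add, show -a ^ 2 / (2 * σ ^ 2) = -(a / σ) ^ 2 / 2 by field_simp]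
  exact exp_le_exp.2 (by nlinarith [mul_nonpos_of_nonpos_of_nonneg has k.cast_nonneg (α := ℝ)])

lemma tsum_measure_le_of_forall_mem_Icc {α : Type*} [MeasurableSpace α] (μ : Measure α)
    {E : ℕ → Set α} (hE : ∀ n, MeasurableSet (E n)) (g : α → ℕ) (k : ℕ)
    (hg : ∀ n, ∀ x ∈ E n, n ∈ Finset.Icc (g x) (g x + k)) :
    ∑' n, μ (E n) ≤ (k + 1) * μ Set.univ := by
  have hpt : ∀ x, ∑' n, (E n).indicator 1 x ≤ (k + 1 : ℝ≥0∞) := fun x =>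
    calc ∑' n, (E n).indicator 1 x
        ≤ ∑' n, (↑(Finset.Icc (g x) (g x + k)) : Set ℕ).indicator (1 : ℕ → ℝ≥0∞) n := by
          refine ENNReal.tsum_le_tsum fun n => ?_
          by_cases hx : x ∈ E n
          · have := Finset.mem_Icc.1 (hg n x hx)
            simp [hx, this]
          · simp [hx]
      _ = k + 1 := by
          rw [← tsum_subtype]
          simp [add_assoc]
  calc ∑' n, μ (E n) = ∫⁻ x, ∑' n, (E n).indicator 1 x ∂μ := by
        rw [lintegral_tsum fun n => (measurable_one.indicator (hE n)).aemeasurable]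
        simp_rw [lintegral_indicator_one (hE _)]
    _ ≤ ∫⁻ _, (k + 1 : ℝ≥0∞) ∂μ := lintegral_mono hpt
    _ = (k + 1) * μ Set.univ := lintegral_const _

lemma summable_succ_mul_pow_mul_exp_neg_sq {q : ℝ} (hq : 0 < q) :
    Summable fun k : ℕ => ((k : ℝ) + 1) * q ^ (k + 1) * exp (-(k : ℝ) ^ 2 / 2) := by
  set L := log q
  have hbound : ∀ k : ℕ, ((k : ℝ) + 1) * q ^ (k + 1) * exp (-(k : ℝ) ^ 2 / 2)
      ≤ q * exp ((L + 1) ^ 2 / 2) * ((k : ℝ) ^ 1 * exp (-1 * k) + exp (-(k : ℝ))) := by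
    intro k
    have hqk : q ^ k = exp (k * L) := by rw [exp_nat_mul, exp_log hq]
    have hexp :
        exp (k * L) * exp (-(k : ℝ) ^ 2 / 2) ≤ exp ((L + 1) ^ 2 / 2) * exp (-(k : ℝ)) := by
      rw [← exp_add, ← exp_add]
      exact exp_le_exp.2 (by nlinarith [sq_nonneg ((k : ℝ) - (L + 1))])
    calc ((k : ℝ) + 1) * q ^ (k + 1) * exp (-(k : ℝ) ^ 2 / 2)
        = ((k : ℝ) + 1) * q * (exp (k * L) * exp (-(k : ℝ) ^ 2 / 2)) := by
          rw [pow_succ, hqk]; ring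
      _ ≤ ((k : ℝ) + 1) * q * (exp ((L + 1) ^ 2 / 2) * exp (-(k : ℝ))) := by gcongr
      _ = _ := by ring_nf
  refine Summable.of_nonneg_of_le (fun k => by positivity) hbound ?_
  exact ((summable_pow_mul_exp_neg_nat_mul 1 one_pos).add summable_exp_neg_nat).mul_left _

noncomputable def tailConst (q : ℝ) : ℝ :=
  ∑' k : ℕ, ((k : ℝ) + 1) * q ^ (k + 1) * exp (-(k : ℝ) ^ 2 / 2)

lemma tailConst_pos {q : ℝ} (hq : 0 < q) : 0 < tailConst q :=
  (summable_succ_mul_pow_mul_exp_neg_sq hq).tsum_pos (fun k => by positivity) 0 (by simp [hq])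

section Walk

variable {Ω : Type*}

def walk (u d σ : ℝ) (ξ : ℕ → Ω → ℝ) (m : ℕ) (ω : Ω) : ℝ :=
  u - d * m + σ * ∑ i ∈ Finset.range m, ξ (i + 1) ω

/-- Since `sInf ∅ = 0`, this is `0` on a path that never enters `(-∞, d]`. -/
noncomputable def firstPassage (d : ℝ) (Y : ℕ → Ω → ℝ) (ω : Ω) : ℕ :=
  sInf {m | 1 ≤ m ∧ Y m ω ≤ d}

def survivalBand (d σ : ℝ) (Y : ℕ → Ω → ℝ) (n k : ℕ) : Set Ω :=
  {ω | (∀ j ∈ Finset.Icc 1 n, d < Y j ω) ∧ Y n ω - d ∈ Set.Ico (σ * k) (σ * (k + 1))}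

variable {u d σ : ℝ} {ξ : ℕ → Ω → ℝ}

@[simp] lemma walk_zero (ω : Ω) : walk u d σ ξ 0 ω = u := by simp [walk]

lemma walk_add (n m : ℕ) (ω : Ω) :
    walk u d σ ξ (n + m) ω =
      walk u d σ ξ n ω - d * m + σ * ∑ i ∈ Finset.range m, ξ (n + i + 1) ω := by
  simp only [walk, Finset.sum_range_add, Nat.cast_add, add_assoc]
  ring

lemma walk_succ (n : ℕ) (ω : Ω) :
    walk u d σ ξ (n + 1) ω = walk u d σ ξ n ω - d + σ * ξ (n + 1) ω := by
  simpa using walk_add (u := u) (d := d) (σ := σ) (ξ := ξ) n 1 ω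

lemma walk_add_le (hσ : 0 ≤ σ) {n m : ℕ} {ω : Ω} {c : ℝ}
    (hξ : ∀ i < m, ξ (n + i + 1) ω ≤ c) :
    walk u d σ ξ (n + m) ω ≤ walk u d σ ξ n ω - m * (d - σ * c) := by
  have hsum : ∑ i ∈ Finset.range m, ξ (n + i + 1) ω ≤ m * c := by
    simpa using Finset.sum_le_card_nsmul _ _ c fun i hi => hξ i (Finset.mem_range.1 hi)
  rw [walk_add]
  nlinarith [mul_le_mul_of_nonneg_left hsum hσ]

lemma firstPassage_mem_Icc {Y : ℕ → Ω → ℝ} {ω : Ω} {n m : ℕ}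
    (hsurv : ∀ j ∈ Finset.Icc 1 n, d < Y j ω) (hm : 1 ≤ m) (hYm : Y m ω ≤ d) :
    firstPassage d Y ω ∈ Finset.Icc (n + 1) m := by
  have hS : firstPassage d Y ω ∈ {m | 1 ≤ m ∧ Y m ω ≤ d} := Nat.sInf_mem ⟨m, hm, hYm⟩
  refine Finset.mem_Icc.2 ⟨?_, Nat.sInf_le ⟨hm, hYm⟩⟩
  by_contra! h
  exact (hS.2.trans_lt (hsurv _ (Finset.mem_Icc.2 ⟨hS.1, by omega⟩))).false

lemma setOf_firstPassage_lt_subset {Y : ℕ → Ω → ℝ} {a : ℝ} (ha : ∀ ω, a < Y 0 ω) :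
    {ω | Y (firstPassage d Y ω) ω < a} ⊆
      ⋃ n, {ω | (∀ j ∈ Finset.Icc 1 n, d < Y j ω) ∧ Y (n + 1) ω < a} := by
  intro ω hω
  have hne : {m | 1 ≤ m ∧ Y m ω ≤ d}.Nonempty := by
    by_contra hempty
    change Y (sInf _) ω < a at hω
    rw [Set.not_nonempty_iff_eq_empty.1 hempty, Nat.sInf_empty] at hω
    exact (ha ω).not_gt hω
  have hS : firstPassage d Y ω ∈ {m | 1 ≤ m ∧ Y m ω ≤ d} := Nat.sInf_mem hne
  refine Set.mem_iUnion.2 ⟨firstPassage d Y ω - 1, fun j hj => ?_, ?_⟩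
  · have hlt : j < firstPassage d Y ω := by have := Finset.mem_Icc.1 hj; omega
    exact not_le.1 fun hle => Nat.notMem_of_lt_sInf hlt ⟨(Finset.mem_Icc.1 hj).1, hle⟩
  · rwa [Nat.sub_add_cancel hS.1]

lemma setOf_walk_succ_lt_subset_iUnion_survivalBand (hσ : 0 < σ) (hdu : d < u) (n : ℕ) (a : ℝ) :
    {ω | (∀ j ∈ Finset.Icc 1 n, d < walk u d σ ξ j ω) ∧ walk u d σ ξ (n + 1) ω < a} ⊆
      ⋃ k : ℕ, survivalBand d σ (walk u d σ ξ) n k ∩ ξ (n + 1) ⁻¹' Set.Iio (a / σ - k) := by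
  rintro ω ⟨hsurv, hlt⟩
  have hpos : 0 < walk u d σ ξ n ω - d := by
    rcases Nat.eq_zero_or_pos n with rfl | hn
    · simpa using hdu
    · linarith [hsurv n (Finset.mem_Icc.2 ⟨hn, le_rfl⟩)]
  set k := ⌊(walk u d σ ξ n ω - d) / σ⌋₊
  have hk : walk u d σ ξ n ω - d ∈ Set.Ico (σ * k) (σ * (k + 1)) := by
    constructor
    · rw [← le_div_iff₀' hσ]; exact Nat.floor_le (div_pos hpos hσ).le
    · rw [← div_lt_iff₀' hσ]; exact Nat.lt_floor_add_one _
  refine Set.mem_iUnion.2 ⟨k, ⟨hsurv, hk⟩, ?_⟩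
  rw [walk_succ] at hlt
  rw [Set.mem_preimage, Set.mem_Iio, lt_sub_iff_add_lt, lt_div_iff₀ hσ]
  linarith [hk.1]

lemma firstPassage_mem_Icc_of_mem_survivalBand (hσ : 0 < σ) {n k : ℕ} {ω : Ω}
    (hB : ω ∈ survivalBand d σ (walk u d σ ξ) n k)
    (hC : ω ∈ ⋂ i ∈ Finset.Icc (n + 1) (n + 1 + k), ξ i ⁻¹' Set.Iio (d / σ - 1)) :
    firstPassage d (walk u d σ ξ) ω ∈ Finset.Icc (n + 1) (n + 1 + k) := by
  have hstep : ∀ i < k + 1, ξ (n + i + 1) ω ≤ d / σ - 1 := fun i hi =>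
    (Set.mem_iInter₂.1 hC (n + i + 1) (Finset.mem_Icc.2 ⟨by omega, by omega⟩)).le
  have hdrop := walk_add_le (u := u) (d := d) hσ.le hstep
  rw [show d - σ * (d / σ - 1) = σ by field_simp; ring] at hdrop
  refine firstPassage_mem_Icc hB.1 (by omega) ?_
  rw [show n + 1 + k = n + (k + 1) by omega]
  push_cast at hdrop ⊢
  nlinarith [hB.2.2]

abbrev past (ξ : ℕ → Ω → ℝ) (n : ℕ) : MeasurableSpace Ω :=
  ⨆ i ∈ Set.Iic n, MeasurableSpace.comap (ξ i) inferInstance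

lemma measurable_past {i n : ℕ} (hin : i ≤ n) : Measurable[past ξ n] (ξ i) :=
  measurable_iff_comap_le.2 <| le_iSup₂ (f := fun j (_ : j ∈ Set.Iic n) =>
    MeasurableSpace.comap (ξ j) inferInstance) i hin

lemma measurable_walk_past (u d σ : ℝ) {j n : ℕ} (hjn : j ≤ n) :
    Measurable[past ξ n] (walk u d σ ξ j) :=
  measurable_const.add <| (Finset.measurable_sum _ fun i hi =>
    measurable_past (by have := Finset.mem_range.1 hi; omega)).const_mul σ

lemma measurableSet_survivalBand_past (u d σ : ℝ) (n k : ℕ) :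
    MeasurableSet[past ξ n] (survivalBand d σ (walk u d σ ξ) n k) := by
  have hsurv : MeasurableSet[past ξ n] {ω | ∀ j ∈ Finset.Icc 1 n, d < walk u d σ ξ j ω} := by
    simp only [Set.ofPred_forall]
    exact .iInter fun j => .iInter fun hj =>
      measurableSet_lt measurable_const (measurable_walk_past u d σ (Finset.mem_Icc.1 hj).2)
  exact hsurv.inter ((measurable_walk_past u d σ le_rfl).sub_const d measurableSet_Ico)

end Walk

section Independence

variable {Ω : Type*} [MeasurableSpace Ω] {P : Measure Ω} {μ : Measure ℝ} {ξ : ℕ → Ω → ℝ}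
  {u d σ : ℝ}

lemma past_le (hξ : ∀ i, Measurable (ξ i)) (n : ℕ) : past ξ n ≤ ‹MeasurableSpace Ω› :=
  iSup₂_le fun i _ => (hξ i).comap_le

lemma measure_inter_biInter_preimage_Iio (hξ : ∀ i, Measurable (ξ i)) (hind : iIndepFun ξ P)
    (hlaw : ∀ i, P.map (ξ i) = μ) {n : ℕ} {B : Set Ω} (hB : MeasurableSet[past ξ n] B)
    {T : Finset ℕ} (hT : ∀ i ∈ T, n < i) (c : ℝ) :
    P (B ∩ ⋂ i ∈ T, ξ i ⁻¹' Set.Iio c) = P B * μ (Set.Iio c) ^ T.card := by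
  have hfuture :
      Indep (past ξ n) (⨆ i ∈ (T : Set ℕ), MeasurableSpace.comap (ξ i) inferInstance) P :=
    indep_iSup_of_disjoint (fun i => (hξ i).comap_le) ((iIndepFun_iff_iIndep _ _ _).1 hind)
      (Set.disjoint_left.2 fun i hi hiT => (hT i hiT).not_ge hi)
  have hC : MeasurableSet[⨆ i ∈ (T : Set ℕ), MeasurableSpace.comap (ξ i) inferInstance]
      (⋂ i ∈ T, ξ i ⁻¹' Set.Iio c) :=
    MeasurableSet.biInter T.countable_toSet fun i hi =>
      le_iSup₂ (f := fun j (_ : j ∈ (T : Set ℕ)) => MeasurableSpace.comap (ξ j) inferInstance)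
        i hi _ ⟨_, measurableSet_Iio, rfl⟩
  rw [(Indep_iff _ _ _).1 hfuture _ _ hB hC,
    hind.meas_biInter fun i _ => ⟨_, measurableSet_Iio, rfl⟩]
  simp_rw [← Measure.map_apply (hξ _) measurableSet_Iio, hlaw, Finset.prod_const]

lemma measure_survivalBand_inter_preimage_Iio (hξ : ∀ i, Measurable (ξ i))
    (hind : iIndepFun ξ P) (hlaw : ∀ i, P.map (ξ i) = μ) (u d σ : ℝ) (n k : ℕ) (c : ℝ) :
    P (survivalBand d σ (walk u d σ ξ) n k ∩ ξ (n + 1) ⁻¹' Set.Iio c) =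
      P (survivalBand d σ (walk u d σ ξ) n k) * μ (Set.Iio c) := by
  simpa using measure_inter_biInter_preimage_Iio hξ hind hlaw
    (measurableSet_survivalBand_past u d σ n k) (T := {n + 1}) (by simp) c

lemma measure_Iio_pow_mul_tsum_measure_survivalBand_le [IsProbabilityMeasure P]
    (hξ : ∀ i, Measurable (ξ i)) (hind : iIndepFun ξ P) (hlaw : ∀ i, P.map (ξ i) = μ)
    (hσ : 0 < σ) (k : ℕ) :
    μ (Set.Iio (d / σ - 1)) ^ (k + 1) * ∑' n, P (survivalBand d σ (walk u d σ ξ) n k) ≤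
      k + 1 := by
  set C := fun n => ⋂ i ∈ Finset.Icc (n + 1) (n + 1 + k), ξ i ⁻¹' Set.Iio (d / σ - 1)
  have hinter : ∀ n, P (survivalBand d σ (walk u d σ ξ) n k ∩ C n) =
      μ (Set.Iio (d / σ - 1)) ^ (k + 1) * P (survivalBand d σ (walk u d σ ξ) n k) := fun n => by
    rw [measure_inter_biInter_preimage_Iio hξ hind hlaw
      (measurableSet_survivalBand_past u d σ n k)
      (fun i hi => by have := Finset.mem_Icc.1 hi; omega), Nat.card_Icc, mul_comm]
    congr 2; omega
  have hmeas : ∀ n, MeasurableSet (survivalBand d σ (walk u d σ ξ) n k ∩ C n) := fun n =>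
    (past_le hξ n _ (measurableSet_survivalBand_past u d σ n k)).inter
      (.biInter (Finset.countable_toSet _) fun i _ => hξ i measurableSet_Iio)
  have hcount := tsum_measure_le_of_forall_mem_Icc P hmeas
    (fun ω => firstPassage d (walk u d σ ξ) ω - 1 - k) k fun n ω hω => by
      have := Finset.mem_Icc.1 (firstPassage_mem_Icc_of_mem_survivalBand hσ hω.1 hω.2)
      exact Finset.mem_Icc.2 ⟨by omega, by omega⟩
  rw [← ENNReal.tsum_mul_left]
  simpa [hinter] using hcount

lemma measure_firstPassage_lt_le_tsum (hξ : ∀ i, Measurable (ξ i)) (hind : iIndepFun ξ P)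
    (hlaw : ∀ i, P.map (ξ i) = μ) (hσ : 0 < σ) (hdu : d < u) {a : ℝ} (ha : a < u) :
    P {ω | walk u d σ ξ (firstPassage d (walk u d σ ξ) ω) ω < a} ≤
      ∑' k : ℕ, (∑' n, P (survivalBand d σ (walk u d σ ξ) n k)) * μ (Set.Iio (a / σ - k)) :=
  calc _ ≤ P (⋃ n, ⋃ k : ℕ,
          survivalBand d σ (walk u d σ ξ) n k ∩ ξ (n + 1) ⁻¹' Set.Iio (a / σ - k)) :=
        measure_mono <| (setOf_firstPassage_lt_subset fun ω => by simpa using ha).trans <|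
          Set.iUnion_mono fun n => setOf_walk_succ_lt_subset_iUnion_survivalBand hσ hdu n a
    _ ≤ ∑' n, ∑' k : ℕ,
          P (survivalBand d σ (walk u d σ ξ) n k ∩ ξ (n + 1) ⁻¹' Set.Iio (a / σ - k)) :=
        (measure_iUnion_le _).trans (ENNReal.tsum_le_tsum fun n => measure_iUnion_le _)
    _ = _ := by
        simp_rw [measure_survivalBand_inter_preimage_Iio hξ hind hlaw]
        rw [ENNReal.tsum_comm]
        simp_rw [ENNReal.tsum_mul_right]

lemma measure_firstPassage_lt_le [IsProbabilityMeasure P] (hξ : ∀ i, Measurable (ξ i))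
    (hind : iIndepFun ξ P) (hlaw : ∀ i, P.map (ξ i) = gaussianReal 0 1)
    (hd : 0 < d) (hσ : 0 < σ) (hdu : d < u) {a : ℝ} (ha : a ≤ 0) :
    P {ω | walk u d σ ξ (firstPassage d (walk u d σ ξ) ω) ω < a} ≤ ENNReal.ofReal
      (tailConst ((gaussianReal 0 1).real (Set.Iio (-1)))⁻¹ * exp (-a ^ 2 / (2 * σ ^ 2))) := by
  set p := (gaussianReal 0 1).real (Set.Iio (-1))
  have hp : 0 < p := measureReal_gaussianReal_Iio_pos _
  have hband : ∀ k : ℕ, ∑' n, P (survivalBand d σ (walk u d σ ξ) n k) ≤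
      ENNReal.ofReal ((k + 1) * p⁻¹ ^ (k + 1)) := fun k => by
    have hpd :
        ENNReal.ofReal p ^ (k + 1) ≤ gaussianReal 0 1 (Set.Iio (d / σ - 1)) ^ (k + 1) := by
      rw [ofReal_measureReal]
      gcongr
      linarith [div_pos hd hσ]
    have h := (mul_le_mul_left hpd _).trans
      (measure_Iio_pow_mul_tsum_measure_survivalBand_le (u := u) hξ hind hlaw hσ k)
    rw [mul_comm, ← ENNReal.le_div_iff_mul_le (by simp [hp]) (by simp)] at h
    rwa [inv_pow, ← div_eq_mul_inv, ENNReal.ofReal_div_of_pos (by positivity),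
      ENNReal.ofReal_pow hp.le, ENNReal.ofReal_add (by positivity) zero_le_one,
      ENNReal.ofReal_natCast, ENNReal.ofReal_one]
  have hsum := (summable_succ_mul_pow_mul_exp_neg_sq (inv_pos.2 hp)).mul_right
    (exp (-a ^ 2 / (2 * σ ^ 2)))
  calc _ ≤ _ := measure_firstPassage_lt_le_tsum hξ hind hlaw hσ hdu (by linarith)
    _ ≤ ∑' k : ℕ, ENNReal.ofReal (((k : ℝ) + 1) * p⁻¹ ^ (k + 1) * exp (-(k : ℝ) ^ 2 / 2) *
          exp (-a ^ 2 / (2 * σ ^ 2))) := by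
        refine ENNReal.tsum_le_tsum fun k => (mul_le_mul' (hband k)
          (gaussianReal_Iio_div_sub_natCast_le hσ ha k)).trans_eq ?_
        rw [← ENNReal.ofReal_mul (by positivity)]
        ring_nf
    _ = _ := by
        rw [← ENNReal.ofReal_tsum_of_nonneg (fun k => by positivity) hsum, tsum_mul_right,
          tailConst]

lemma ae_tendsto_walk_atBot (hξ : ∀ i, Measurable (ξ i)) (hind : iIndepFun ξ P)
    (hlaw : ∀ i, P.map (ξ i) = μ) (hint : Integrable id μ) (hmean : ∫ x, x ∂μ = 0)
    (hd : 0 < d) (u σ : ℝ) :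
    ∀ᵐ ω ∂P, Tendsto (fun m => walk u d σ ξ m ω) atTop atBot := by
  have hint₁ : Integrable (ξ 1) P := by
    rw [← hlaw 1] at hint
    exact (integrable_map_measure hint.aestronglyMeasurable (hξ 1).aemeasurable).1 hint
  have hmean₁ : P[ξ 1] = 0 := by
    rw [← hmean, ← hlaw 1]
    exact (integral_map (hξ 1).aemeasurable aestronglyMeasurable_id).symm
  have hslln := strong_law_ae_real (fun i => ξ (i + 1)) hint₁
    (fun i j hij => hind.indepFun (by omega))
    (fun i => ⟨(hξ _).aemeasurable, (hξ _).aemeasurable, by rw [hlaw, hlaw]⟩)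
  filter_upwards [hslln] with ω hω
  rw [hmean₁] at hω
  have hlim : Tendsto
      (fun m : ℕ => u / m - d + σ * ((∑ i ∈ Finset.range m, ξ (i + 1) ω) / m)) atTop (𝓝 (-d)) := by
    simpa using ((tendsto_const_div_atTop_nhds_zero_nat u).sub_const d).add (hω.const_mul σ)
  refine (tendsto_natCast_atTop_atTop.atTop_mul_neg (neg_neg_of_pos hd) hlim).congr' ?_
  filter_upwards [eventually_ne_atTop 0] with m hm
  simp only [walk]
  field_simp

end Independence

theorem stmt17 :
    ∃ C : ℝ, 0 < C ∧
      ∀ (Ω : Type) (_ : MeasurableSpace Ω) (P : Measure Ω), IsProbabilityMeasure P →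
      ∀ ξ : ℕ → Ω → ℝ, (∀ i, Measurable (ξ i)) →
        iIndepFun ξ P →
        (∀ i, Measure.map (ξ i) P = gaussianReal 0 1) →
        ∀ d σ u : ℝ, 0 < d → 0 < σ → d < u →
        ∀ Y : ℕ → Ω → ℝ,
          (∀ m ω, Y m ω = u - d * m + σ * ∑ i ∈ Finset.range m, ξ (i + 1) ω) →
        ∀ S : Ω → ℕ, (∀ ω, S ω = sInf {m : ℕ | 1 ≤ m ∧ Y m ω ≤ d}) →
          (∀ᵐ ω ∂P, ∃ m : ℕ, 1 ≤ m ∧ Y m ω ≤ d) ∧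
          ∀ a : ℝ, a ≤ -d →
            P {ω | Y (S ω) ω < a} ≤
              ENNReal.ofReal (C * Real.exp (-(a ^ 2) / (2 * σ ^ 2))) := by
  refine ⟨_, tailConst_pos (inv_pos.2 (measureReal_gaussianReal_Iio_pos (-1))), ?_⟩
  intro Ω _ P _ ξ hξ hind hlaw d σ u hd hσ hdu Y hY S hS
  obtain rfl : Y = walk u d σ ξ := funext fun m => funext (hY m)
  obtain rfl : S = firstPassage d (walk u d σ ξ) := funext hS
  refine ⟨?_, fun a ha => by
    simpa using measure_firstPassage_lt_le hξ hind hlaw hd hσ hdu (a := a) (by linarith)⟩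
  filter_upwards [ae_tendsto_walk_atBot hξ hind hlaw IsGaussian.integrable_id
    integral_id_gaussianReal hd u σ] with ω hω
  obtain ⟨m, hm, hm1⟩ := ((hω.eventually_le_atBot d).and (eventually_ge_atTop 1)).exists
  exact ⟨m, hm1, hm⟩
end

section
/- For every κ ∈ (0,1) there exists ε > 0 such that the following holds for every d > 0, every σ ∈ (0, ε·d] and every u ∈ ℝ. Let (Y_m)_{m≥0} be the oscillating random walk with parameters d, σ started at u, and let T = inf{m ≥ 0 : |Y_m| ≤ d}. Then for every j ∈ ℕ, P(T > j) ≤ κ^{2j − 8|u|/d}. -/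
open MeasureTheory ProbabilityTheory

/-- The oscillating random walk with parameters `d`, `σ`, started at `u`, driven by the
noise sequence `ξ`: the increment drifts by `-d` above `d`, by `d` below `-d`, and has
zero drift (and doubled noise) inside `[-d, d]`. -/
noncomputable def oscWalk (Ω : Type*) (d σ u : ℝ) (ξ : ℕ → Ω → ℝ) : ℕ → Ω → ℝ
  | 0 => fun _ => u
  | m + 1 => fun ω =>
      let y := oscWalk Ω d σ u ξ m ω
      y + (if d < y then -d else if y < -d then d else 0) +
        σ * (if |y| ≤ d then 2 else 1) * ξ (m + 1) ω


/-! Outside `[-d, d]` the walk moves towards the origin by `d` per step, so as long as it has not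
entered, `|Y m| ≤ |u| - m d + σ ∑_{k ≤ m} |ξ k|`. Surviving up to time `j` thus forces
`∑_{k ≤ j} |ξ k| ≥ ((j + 1) d - |u|) / σ`, and the Chernoff bound at `t = 1`, with
`E exp |ξ| ≤ 2 exp (1/2)`, bounds the probability of this by
`exp (-((j + 1) d - |u|) / σ) (2 exp (1/2)) ^ j`. For `ε = 3 / (4 (log (2 exp (1/2)) - 2 log κ))`
and `|u| < j d / 4` this is at most `κ ^ (2 j)`; for `|u| ≥ j d / 4` the claimed bound is `≥ 1`. -/

open Real Finset

section Exponential

variable {Ω : Type*} {mΩ : MeasurableSpace Ω} {P : Measure Ω} {X : Ω → ℝ} {t : ℝ}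

lemma exp_mul_abs_le (t x : ℝ) : exp (t * |x|) ≤ exp (t * x) + exp (-t * x) := by
  rcases abs_choice x with h | h <;> rw [h]
  · linarith [exp_pos (-t * x)]
  · rw [mul_neg, ← neg_mul]
    linarith [exp_pos (t * x)]

lemma integrable_exp_mul_abs (hpos : Integrable (fun ω ↦ exp (t * X ω)) P)
    (hneg : Integrable (fun ω ↦ exp (-t * X ω)) P) (hX : AEMeasurable X P) :
    Integrable (fun ω ↦ exp (t * |X ω|)) P :=
  (hpos.add hneg).mono' (by fun_prop) <| ae_of_all _ fun ω ↦ by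
    simpa only [norm_eq_abs, abs_exp, Pi.add_apply] using exp_mul_abs_le t (X ω)

lemma mgf_abs_le_add (hpos : Integrable (fun ω ↦ exp (t * X ω)) P)
    (hneg : Integrable (fun ω ↦ exp (-t * X ω)) P) (hX : AEMeasurable X P) :
    mgf (fun ω ↦ |X ω|) P t ≤ mgf X P t + mgf X P (-t) := by
  rw [mgf, mgf, mgf, ← integral_add hpos hneg]
  exact integral_mono (integrable_exp_mul_abs hpos hneg hX) (hpos.add hneg)
    fun ω ↦ exp_mul_abs_le t (X ω)

variable [IsProbabilityMeasure P]

lemma integrable_exp_mul_of_map_eq_gaussianReal {μ : ℝ} {v : NNReal}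
    (hX : P.map X = gaussianReal μ v) (t : ℝ) :
    Integrable (fun ω ↦ exp (t * X ω)) P := by
  rw [← mgf_pos_iff, mgf_gaussianReal hX]
  exact exp_pos _

lemma mgf_abs_le_of_map_eq_gaussianReal (hX : P.map X = gaussianReal 0 1) (t : ℝ) :
    mgf (fun ω ↦ |X ω|) P t ≤ 2 * exp (t ^ 2 / 2) := by
  have hXm : AEMeasurable X P := aemeasurable_of_map_neZero (by rw [hX]; infer_instance)
  calc mgf (fun ω ↦ |X ω|) P t ≤ mgf X P t + mgf X P (-t) :=
        mgf_abs_le_add (integrable_exp_mul_of_map_eq_gaussianReal hX t)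
          (integrable_exp_mul_of_map_eq_gaussianReal hX (-t)) hXm
    _ = 2 * exp (t ^ 2 / 2) := by
        rw [mgf_gaussianReal hX, mgf_gaussianReal hX]
        simp only [NNReal.coe_one, zero_mul, zero_add, one_mul, neg_sq]
        ring

end Exponential

lemma measureReal_le_sum_abs_le {Ω ι : Type*} {mΩ : MeasurableSpace Ω} {P : Measure Ω}
    [IsProbabilityMeasure P] {ξ : ι → Ω → ℝ} (hmeas : ∀ i, Measurable (ξ i))
    (hindep : iIndepFun ξ P) (hmap : ∀ i, P.map (ξ i) = gaussianReal 0 1)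
    (s : Finset ι) (a : ℝ) :
    P.real {ω | a ≤ ∑ i ∈ s, |ξ i ω|} ≤ exp (-a) * (2 * exp (1 / 2)) ^ #s := by
  set X : ι → Ω → ℝ := fun i ω ↦ |ξ i ω|
  have hXmeas : ∀ i, Measurable (X i) := fun i ↦ (hmeas i).abs
  have hXindep : iIndepFun X P := hindep.comp (fun _ x ↦ |x|) fun _ ↦ measurable_abs
  have hXint : ∀ i ∈ s, Integrable (fun ω ↦ exp (1 * X i ω)) P := fun i _ ↦
    integrable_exp_mul_abs (integrable_exp_mul_of_map_eq_gaussianReal (hmap i) 1)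
      (integrable_exp_mul_of_map_eq_gaussianReal (hmap i) (-1)) (hmeas i).aemeasurable
  have hsum : ∀ ω, ∑ i ∈ s, |ξ i ω| = (∑ i ∈ s, X i) ω := fun ω ↦ by simp [X]
  simp_rw [hsum]
  calc P.real {ω | a ≤ (∑ i ∈ s, X i) ω}
      ≤ exp (-1 * a) * mgf (∑ i ∈ s, X i) P 1 :=
        measure_ge_le_exp_mul_mgf a zero_le_one (hXindep.integrable_exp_mul_sum hXmeas hXint)
    _ ≤ exp (-a) * (2 * exp (1 / 2)) ^ #s := by
        rw [neg_one_mul, hXindep.mgf_sum hXmeas, ← prod_const]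
        gcongr with i
        · exact fun _ _ ↦ mgf_nonneg
        · simpa using mgf_abs_le_of_map_eq_gaussianReal (hmap i) 1

section Walk

variable {Ω : Type*} {d σ u : ℝ} {ξ : ℕ → Ω → ℝ} {ω : Ω}

lemma abs_add_drift_of_lt_abs {y : ℝ} (hd : 0 ≤ d) (hy : d < |y|) :
    |y + (if d < y then -d else if y < -d then d else 0)| = |y| - d := by
  rcases lt_abs.mp hy with h | h
  · rw [if_pos h, abs_of_pos (by linarith : 0 < y), abs_of_nonneg (by linarith)]
    ring
  · rw [if_neg (by linarith), if_pos (by linarith), abs_of_neg (by linarith : y < 0),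
      abs_of_nonpos (by linarith : y + d ≤ 0)]
    ring

lemma abs_oscWalk_succ_le (hd : 0 ≤ d) {m : ℕ} (h : d < |oscWalk Ω d σ u ξ m ω|) :
    |oscWalk Ω d σ u ξ (m + 1) ω| ≤ |oscWalk Ω d σ u ξ m ω| - d + |σ| * |ξ (m + 1) ω| := by
  rw [oscWalk]
  simp only [if_neg (not_le.2 h), mul_one]
  calc _ ≤ _ := abs_add_le _ _
    _ = _ := by rw [abs_add_drift_of_lt_abs hd h, abs_mul]

lemma abs_oscWalk_le_of_forall_lt_abs (hd : 0 ≤ d) {m : ℕ}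
    (h : ∀ k < m, d < |oscWalk Ω d σ u ξ k ω|) :
    |oscWalk Ω d σ u ξ m ω| ≤ |u| - m * d + |σ| * ∑ k ∈ Icc 1 m, |ξ k ω| := by
  induction m with
  | zero => simp [oscWalk]
  | succ m ih =>
    have hstep := abs_oscWalk_succ_le hd (h m m.lt_succ_self)
    have hpath := ih fun k hk ↦ h k (hk.trans m.lt_succ_self)
    rw [sum_Icc_succ_top (by omega), Nat.cast_succ, mul_add]
    linarith

lemma setOf_forall_lt_abs_oscWalk_subset (hd : 0 ≤ d) (hσ : 0 < σ) (j : ℕ) :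
    {ω | ∀ m ≤ j, d < |oscWalk Ω d σ u ξ m ω|} ⊆
      {ω | ((j + 1) * d - |u|) / σ ≤ ∑ k ∈ Icc 1 j, |ξ k ω|} := by
  intro ω hω
  have hpath := abs_oscWalk_le_of_forall_lt_abs hd fun k hk ↦ hω k hk.le
  have hj := hω j le_rfl
  rw [abs_of_pos hσ] at hpath
  rw [Set.mem_ofPred_eq, div_le_iff₀ hσ]
  linarith

lemma measureReal_forall_lt_abs_oscWalk_le {mΩ : MeasurableSpace Ω} {P : Measure Ω}
    [IsProbabilityMeasure P] (hmeas : ∀ i, Measurable (ξ i)) (hindep : iIndepFun ξ P)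
    (hmap : ∀ i, P.map (ξ i) = gaussianReal 0 1) (hd : 0 ≤ d) (hσ : 0 < σ) (j : ℕ) :
    P.real {ω | ∀ m ≤ j, d < |oscWalk Ω d σ u ξ m ω|} ≤
      exp (-(((j + 1) * d - |u|) / σ)) * (2 * exp (1 / 2)) ^ j := by
  refine (measureReal_mono (setOf_forall_lt_abs_oscWalk_subset hd hσ j)).trans ?_
  simpa using measureReal_le_sum_abs_le hmeas hindep hmap (Icc 1 j) (((j + 1) * d - |u|) / σ)

end Walk

lemma exp_neg_mul_pow_le_pow {κ c t : ℝ} {j : ℕ} (hκ : 0 < κ) (hc : 0 < c)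
    (ht : j * (log c - 2 * log κ) ≤ t) :
    exp (-t) * c ^ j ≤ κ ^ (2 * j) := by
  rw [← exp_log hc, ← exp_log hκ, ← exp_nat_mul, ← exp_nat_mul, ← exp_add, exp_le_exp]
  push_cast
  linarith

lemma natCast_mul_le_sub_div {K d σ a : ℝ} {j : ℕ} (hK : 0 < K) (hd : 0 ≤ d) (hσ : 0 < σ)
    (hσK : σ ≤ 3 / (4 * K) * d) (ha : 4 * a < j * d) :
    j * K ≤ ((j + 1) * d - a) / σ := by
  rw [le_div_iff₀ hσ]
  calc j * K * σ ≤ j * K * (3 / (4 * K) * d) := by gcongr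
    _ = 3 / 4 * j * d := by field_simp
    _ ≤ (j + 1) * d - a := by linarith

theorem stmt18 (κ : ℝ) (hκ : κ ∈ Set.Ioo (0 : ℝ) 1) :
    ∃ ε : ℝ, 0 < ε ∧
      ∀ d : ℝ, 0 < d → ∀ σ : ℝ, 0 < σ → σ ≤ ε * d → ∀ u : ℝ,
      ∀ (Ω : Type) (_ : MeasurableSpace Ω) (P : Measure Ω), IsProbabilityMeasure P →
      ∀ ξ : ℕ → Ω → ℝ, (∀ i, Measurable (ξ i)) →
        iIndepFun ξ P →
        (∀ i, Measure.map (ξ i) P = gaussianReal 0 1) →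
        ∀ j : ℕ,
          P {ω | ∀ m : ℕ, m ≤ j → d < |oscWalk Ω d σ u ξ m ω|} ≤
            ENNReal.ofReal (κ ^ ((2 * j : ℝ) - 8 * |u| / d)) := by
  obtain ⟨hκ0, hκ1⟩ := hκ
  set K := log (2 * exp (1 / 2)) - 2 * log κ
  have hK : 0 < K := by
    have hc : 1 < 2 * exp (1 / 2) := by linarith [one_le_exp (by norm_num : (0 : ℝ) ≤ 1 / 2)]
    linarith [log_pos hc, log_neg hκ0 hκ1]
  refine ⟨3 / (4 * K), by positivity, fun d hd σ hσ hσK u Ω _ P _ ξ hmeas hindep hmap j ↦ ?_⟩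
  by_cases hu : 4 * |u| < j * d
  · rw [← ofReal_measureReal]
    refine ENNReal.ofReal_le_ofReal ?_
    calc _ ≤ exp (-(((j + 1) * d - |u|) / σ)) * (2 * exp (1 / 2)) ^ j :=
          measureReal_forall_lt_abs_oscWalk_le hmeas hindep hmap hd.le hσ j
      _ ≤ κ ^ (2 * j) :=
          exp_neg_mul_pow_le_pow hκ0 (by positivity) (natCast_mul_le_sub_div hK hd.le hσ hσK hu)
      _ ≤ κ ^ ((2 * j : ℝ) - 8 * |u| / d) := by
          rw [← rpow_natCast]
          push_cast
          have : 0 ≤ 8 * |u| / d := by positivity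
          exact rpow_le_rpow_of_exponent_ge hκ0 hκ1.le (by linarith)
  · have hexp : (2 * j : ℝ) - 8 * |u| / d ≤ 0 := by
      rw [sub_nonpos, le_div_iff₀ hd]
      linarith
    calc P _ ≤ 1 := prob_le_one
      _ ≤ _ := by
          rw [← ENNReal.ofReal_one]
          exact ENNReal.ofReal_le_ofReal (one_le_rpow_of_pos_of_le_one_of_nonpos hκ0 hκ1.le hexp)
end
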